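/- arXiv:1102.2523 — 4 statements merged into one kernel-verified Lean document; each statement's English description precedes it below -/
import Mathlib

section
/- Ky Fan's determinant inequality: Let A and B be m×m Hermitian positive definite complex matrices and let λ ∈ [0,1]. Then det(λA + (1−λ)B) ≥ (det A)^λ (det B)^{1−λ}. -/
/-!
Write `A = Cᴴ C` with `C` invertible and `B = Cᴴ D C`. Then `λA + (1-λ)B = Cᴴ (λ + (1-λ)D) C`,
and both sides of the inequality pick up the same factor `|det C|²`, which reduces it to
`A = 1`. There, in an eigenbasis of `D`, it is the product over the eigenvalues `μᵢ > 0` of the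
weighted AM-GM inequalities `μᵢ^(1-λ) ≤ λ + (1-λ) μᵢ`.
-/

open scoped ComplexOrder Matrix

theorem Real.prod_rpow_le_prod_add_mul {ι : Type*} (s : Finset ι) {μ : ι → ℝ}
    (hμ : ∀ i ∈ s, 0 ≤ μ i) {t : ℝ} (h0 : 0 ≤ t) (h1 : t ≤ 1) :
    (∏ i ∈ s, μ i) ^ (1 - t) ≤ ∏ i ∈ s, (t + (1 - t) * μ i) := by
  rw [← Real.finsetProd_rpow s μ hμ]
  refine Finset.prod_le_prod (fun i hi => Real.rpow_nonneg (hμ i hi) _) fun i hi => ?_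
  simpa using Real.geom_mean_le_arith_mean2_weighted h0 (sub_nonneg.mpr h1) zero_le_one
    (hμ i hi) (add_sub_cancel t 1)

namespace Matrix

variable {n 𝕜 : Type*} [Fintype n] [DecidableEq n] [RCLike 𝕜]

theorem re_det_conjTranspose_mul_mul (C X : Matrix n n 𝕜) :
    RCLike.re (Cᴴ * X * C).det = ‖C.det‖ ^ 2 * RCLike.re X.det := by
  rw [det_mul, det_mul, det_conjTranspose, mul_right_comm, RCLike.star_def, RCLike.conj_mul]
  exact_mod_cast RCLike.re_ofReal_mul _ _

theorem IsHermitian.det_smul_one_add_smul {D : Matrix n n 𝕜} (hD : D.IsHermitian) (a b : 𝕜) :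
    (a • 1 + b • D).det = ∏ i, (a + b * hD.eigenvalues i) := by
  set U : Matrix n n 𝕜 := ↑hD.eigenvectorUnitary
  have hU : U * star U = 1 := Unitary.mul_star_self_of_mem hD.eigenvectorUnitary.2
  have hdiag : diagonal (fun i => a + b * (hD.eigenvalues i : 𝕜)) =
      a • 1 + b • diagonal (RCLike.ofReal ∘ hD.eigenvalues) := by
    ext i j
    rcases eq_or_ne i j with rfl | h <;> simp [*]
  have hconj :
      a • 1 + b • D = U * diagonal (fun i => a + b * (hD.eigenvalues i : 𝕜)) * star U := by
    rw [hdiag, mul_add, add_mul, mul_smul_comm a, smul_mul_assoc a, mul_one, hU, mul_smul_comm b,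
      smul_mul_assoc b, ← Unitary.conjStarAlgAut_apply (S := 𝕜), ← hD.spectral_theorem]
  rw [hconj, det_mul_right_comm, hU, one_mul, det_diagonal]

theorem PosDef.re_det_rpow_le_re_det_smul_one_add_smul {D : Matrix n n 𝕜} (hD : D.PosDef)
    {t : ℝ} (h0 : 0 ≤ t) (h1 : t ≤ 1) :
    RCLike.re D.det ^ (1 - t) ≤ RCLike.re ((t : 𝕜) • 1 + ((1 - t : ℝ) : 𝕜) • D).det := by
  rw [hD.1.det_smul_one_add_smul, hD.1.det_eq_prod_eigenvalues]
  simp only [← RCLike.ofReal_mul, ← RCLike.ofReal_add, ← RCLike.ofReal_prod, RCLike.ofReal_re]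
  exact Real.prod_rpow_le_prod_add_mul _ (fun i _ => (hD.eigenvalues_pos i).le) h0 h1

open scoped MatrixOrder in
theorem PosDef.exists_isUnit_eq_conjTranspose_mul_self {A : Matrix n n 𝕜} (hA : A.PosDef) :
    ∃ C : Matrix n n 𝕜, IsUnit C ∧ A = Cᴴ * C :=
  CStarAlgebra.isStrictlyPositive_iff_eq_star_mul_self.mp hA.isStrictlyPositive

theorem PosDef.exists_posDef_eq_conjTranspose_mul_mul {B C : Matrix n n 𝕜} (hB : B.PosDef)
    (hC : IsUnit C) : ∃ D : Matrix n n 𝕜, D.PosDef ∧ B = Cᴴ * D * C := by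
  refine ⟨(C⁻¹)ᴴ * B * C⁻¹, hB.conjTranspose_mul_mul_same ?_, ?_⟩
  · exact mulVec_injective_iff_isUnit.mpr (isUnit_nonsing_inv_iff.mpr hC)
  · have hdet := (isUnit_iff_isUnit_det C).mp hC
    rw [mul_assoc, mul_assoc, nonsing_inv_mul C hdet, mul_one, ← mul_assoc, ← conjTranspose_mul,
      nonsing_inv_mul C hdet, conjTranspose_one, one_mul]

end Matrix

/-- **Ky Fan's determinant inequality.** If `A` and `B` are Hermitian positive definite
complex matrices and `λ ∈ [0,1]`, then
`det(λ A + (1-λ) B) ≥ (det A)^λ (det B)^(1-λ)`.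
(The determinants of Hermitian positive definite matrices are positive reals, realized
here via the real part; the right-hand side uses real powers.) -/
theorem ky_fan_determinant_inequality {m : ℕ}
    (A B : Matrix (Fin m) (Fin m) ℂ) (hA : A.PosDef) (hB : B.PosDef)
    (lam : ℝ) (h0 : 0 ≤ lam) (h1 : lam ≤ 1) :
    A.det.re ^ lam * B.det.re ^ (1 - lam) ≤
      ((lam : ℂ) • A + ((1 - lam : ℝ) : ℂ) • B).det.re := by
  obtain ⟨C, hC, rfl⟩ := hA.exists_isUnit_eq_conjTranspose_mul_self
  obtain ⟨D, hD, rfl⟩ := hB.exists_posDef_eq_conjTranspose_mul_mul hC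
  have hsum : (lam : ℂ) • (Cᴴ * C) + ((1 - lam : ℝ) : ℂ) • (Cᴴ * D * C) =
      Cᴴ * ((lam : ℂ) • 1 + ((1 - lam : ℝ) : ℂ) • D) * C := by
    simp only [mul_add, add_mul, mul_smul_comm, smul_mul_assoc, mul_one]
  have hc : 0 < ‖C.det‖ ^ 2 :=
    pow_pos (norm_pos_iff.mpr ((Matrix.isUnit_iff_isUnit_det C).mp hC).ne_zero) 2
  have hd : 0 ≤ D.det.re := (Complex.lt_def.mp hD.det_pos).1.le
  -- restated with `Complex.re` so that it can rewrite the goal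
  have hconj (X : Matrix (Fin m) (Fin m) ℂ) : (Cᴴ * X * C).det.re = ‖C.det‖ ^ 2 * X.det.re :=
    Matrix.re_det_conjTranspose_mul_mul C X
  have hC1 : (Cᴴ * C).det.re = ‖C.det‖ ^ 2 := by simpa using hconj 1
  calc (Cᴴ * C).det.re ^ lam * (Cᴴ * D * C).det.re ^ (1 - lam)
      = (‖C.det‖ ^ 2) ^ lam * (‖C.det‖ ^ 2 * D.det.re) ^ (1 - lam) := by
        rw [hC1, hconj]
    _ = ‖C.det‖ ^ 2 * D.det.re ^ (1 - lam) := by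
        rw [Real.mul_rpow hc.le hd, ← mul_assoc, ← Real.rpow_add hc, add_sub_cancel, Real.rpow_one]
    _ ≤ ‖C.det‖ ^ 2 * ((lam : ℂ) • 1 + ((1 - lam : ℝ) : ℂ) • D).det.re :=
        mul_le_mul_of_nonneg_left (hD.re_det_rpow_le_re_det_smul_one_add_smul h0 h1) hc.le
    _ = ((lam : ℂ) • (Cᴴ * C) + ((1 - lam : ℝ) : ℂ) • (Cᴴ * D * C)).det.re := by
        rw [hsum, hconj]
end

section
/- Comparison of discrete and continuous elliptic symbols: There exist constants c, C > 0, depending only on the lattice basis {a_j} and the reciprocal basis {b_j} (not on ε), such that for every ε = 1/n and every ξ ∈ 𝕃*_ε: c Λ²(ξ) ≤ Λ²_ε(ξ) ≤ C Λ²(ξ). -/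
open scoped RealInnerProductSpace BigOperators

noncomputable section

/-- Jordan-type two-sided bound for `sin² x` when `|x| ≤ π/2`. -/
lemma sin_sq_two_sided {x : ℝ} (hx : |x| ≤ Real.pi / 2) :
    4 / Real.pi ^ 2 * x ^ 2 ≤ Real.sin x ^ 2 ∧ Real.sin x ^ 2 ≤ x ^ 2 := by
  constructor
  · have h := Real.mul_abs_le_abs_sin hx
    have h0 : 0 ≤ 2 / Real.pi * |x| := by positivity
    have h1 : (2 / Real.pi * |x|) ^ 2 ≤ |Real.sin x| ^ 2 := pow_le_pow_left₀ h0 h 2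
    rw [mul_pow, sq_abs, sq_abs, div_pow] at h1
    norm_num at h1
    exact h1
  · exact Real.sin_sq_le_sq

/-- **Comparison of discrete and continuous elliptic symbols.**
Let `{a j}` be the basis of a Bravais lattice in `ℝ^d` and `{b j}` the reciprocal basis
(`⟪a j, b k⟫ = 2π δ_{jk}`).  There are constants `c, C > 0`, depending only on the bases
(not on `ε = 1/n`), such that for every `n ≥ 1` and every `ξ = Σ_j μ_j b_j ∈ 𝕃*_ε`
(i.e. `μ_j ∈ ℤ`, `-n/2 ≤ μ_j < n/2`):
`c Λ²(ξ) ≤ Λ²_ε(ξ) ≤ C Λ²(ξ)`, where `Λ²(ξ) = 1 + |ξ|²` and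
`Λ²_ε(ξ) = 1 + Σ_j (4/ε²) sin²(ε a_j·ξ / 2)`. -/
theorem discrete_continuous_symbol_comparison
    (d : ℕ) (hd : 0 < d)
    (a b : Fin d → EuclideanSpace ℝ (Fin d))
    (hab : ∀ j k, ⟪a j, b k⟫ = if j = k then 2 * Real.pi else 0) :
    ∃ c C : ℝ, 0 < c ∧ 0 < C ∧
      ∀ n : ℕ, 0 < n → ∀ μ : Fin d → ℤ,
        (∀ j, -(n : ℤ) ≤ 2 * μ j ∧ 2 * μ j < (n : ℤ)) →
        c * (1 + ‖∑ j, (μ j : ℝ) • b j‖ ^ 2) ≤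
            1 + ∑ j, 4 * (n : ℝ) ^ 2 *
              Real.sin (⟪a j, ∑ k, (μ k : ℝ) • b k⟫ / (2 * (n : ℝ))) ^ 2 ∧
          1 + ∑ j, 4 * (n : ℝ) ^ 2 *
              Real.sin (⟪a j, ∑ k, (μ k : ℝ) • b k⟫ / (2 * (n : ℝ))) ^ 2 ≤
            C * (1 + ‖∑ j, (μ j : ℝ) • b j‖ ^ 2) := by
  classical
  set M : ℝ := ∑ j, ‖b j‖ ^ 2 with hM
  set A : ℝ := ∑ j, ‖a j‖ ^ 2 with hA
  have hMpos : 0 < M := by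
    have j0 : Fin d := ⟨0, hd⟩
    have hbne : b j0 ≠ 0 := by
      intro h
      have := hab j0 j0
      rw [h, inner_zero_right, if_pos rfl] at this
      exact (by positivity : (0:ℝ) < 2 * Real.pi).ne this
    refine Finset.sum_pos' (fun j _ => by positivity) ⟨j0, Finset.mem_univ _, ?_⟩
    have : 0 < ‖b j0‖ := norm_pos_iff.mpr hbne
    positivity
  refine ⟨min 1 (16 / M), 1 + A, lt_min one_pos (by positivity), by positivity, ?_⟩
  intro n hn μ hμ
  set ξ := ∑ k, (μ k : ℝ) • b k with hξ
  -- inner products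
  have hinner : ∀ j, ⟪a j, ξ⟫ = 2 * Real.pi * (μ j : ℝ) := by
    intro j
    rw [hξ, inner_sum]
    have : ∀ k, ⟪a j, (μ k : ℝ) • b k⟫ = (μ k : ℝ) * (if j = k then 2 * Real.pi else 0) := by
      intro k; rw [real_inner_smul_right, hab]
    simp_rw [this]
    simp [Finset.sum_ite_eq' , mul_comm]
  set S : ℝ := ∑ j, ((μ j : ℝ)) ^ 2 with hS
  have hSnonneg : 0 ≤ S := Finset.sum_nonneg fun j _ => sq_nonneg _
  -- per-term bounds
  have hterm : ∀ j : Fin d,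
      16 * ((μ j : ℝ)) ^ 2 ≤ 4 * (n : ℝ) ^ 2 * Real.sin (⟪a j, ξ⟫ / (2 * (n : ℝ))) ^ 2 ∧
      4 * (n : ℝ) ^ 2 * Real.sin (⟪a j, ξ⟫ / (2 * (n : ℝ))) ^ 2 ≤
        4 * Real.pi ^ 2 * ((μ j : ℝ)) ^ 2 := by
    intro j
    have hnpos : (0:ℝ) < n := by exact_mod_cast hn
    have hx : ⟪a j, ξ⟫ / (2 * (n : ℝ)) = Real.pi * (μ j : ℝ) / n := by
      rw [hinner j]; field_simp
    have hμj : |(μ j : ℝ)| * 2 ≤ (n : ℝ) := by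
      have h1 := (hμ j).1
      have h2 := (hμ j).2
      have h3 : |(2 * μ j : ℤ)| ≤ (n : ℤ) := abs_le.mpr ⟨h1, le_of_lt h2⟩
      have : (|(2 * μ j : ℤ)| : ℝ) ≤ (n : ℝ) := by exact_mod_cast h3
      push_cast at this
      rw [abs_mul, abs_two] at this
      linarith
    have habs : |Real.pi * (μ j : ℝ) / n| ≤ Real.pi / 2 := by
      rw [abs_div, abs_mul, abs_of_pos Real.pi_pos, abs_of_pos hnpos,
        div_le_div_iff₀ hnpos two_pos]
      nlinarith [Real.pi_pos]
    obtain ⟨hlo, hhi⟩ := sin_sq_two_sided (x := Real.pi * (μ j : ℝ) / n) habs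
    have hxsq : (Real.pi * (μ j : ℝ) / n) ^ 2 = Real.pi ^ 2 * ((μ j : ℝ)) ^ 2 / n ^ 2 := by
      field_simp
    constructor
    · rw [hx]
      have := mul_le_mul_of_nonneg_left hlo (by positivity : (0:ℝ) ≤ 4 * (n:ℝ)^2)
      calc 16 * ((μ j : ℝ)) ^ 2
          = 4 * (n : ℝ) ^ 2 * (4 / Real.pi ^ 2 * (Real.pi * (μ j : ℝ) / n) ^ 2) := by
            rw [hxsq]; field_simp; ring
        _ ≤ _ := this
    · rw [hx]
      have := mul_le_mul_of_nonneg_left hhi (by positivity : (0:ℝ) ≤ 4 * (n:ℝ)^2)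
      calc 4 * (n : ℝ) ^ 2 * Real.sin (Real.pi * (μ j : ℝ) / n) ^ 2
          ≤ 4 * (n : ℝ) ^ 2 * (Real.pi * (μ j : ℝ) / n) ^ 2 := this
        _ = 4 * Real.pi ^ 2 * ((μ j : ℝ)) ^ 2 := by rw [hxsq]; field_simp
  have hsum_lo : 16 * S ≤ ∑ j, 4 * (n : ℝ) ^ 2 * Real.sin (⟪a j, ξ⟫ / (2 * (n : ℝ))) ^ 2 := by
    rw [hS, Finset.mul_sum]
    exact Finset.sum_le_sum fun j _ => (hterm j).1
  have hsum_hi : ∑ j, 4 * (n : ℝ) ^ 2 * Real.sin (⟪a j, ξ⟫ / (2 * (n : ℝ))) ^ 2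
      ≤ 4 * Real.pi ^ 2 * S := by
    rw [hS, Finset.mul_sum]
    exact Finset.sum_le_sum fun j _ => (hterm j).2
  -- norm bounds
  have hnorm_le : ‖ξ‖ ^ 2 ≤ M * S := by
    have h1 : ‖ξ‖ ≤ ∑ j, |(μ j : ℝ)| * ‖b j‖ := by
      rw [hξ]
      refine (norm_sum_le _ _).trans (le_of_eq ?_)
      refine Finset.sum_congr rfl fun j _ => ?_
      rw [norm_smul, Real.norm_eq_abs]
    have h2 : (∑ j, |(μ j : ℝ)| * ‖b j‖) ^ 2 ≤ (∑ j, |(μ j : ℝ)| ^ 2) * ∑ j, ‖b j‖ ^ 2 :=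
      Finset.sum_mul_sq_le_sq_mul_sq _ _ _
    have h3 : (∑ j, |(μ j : ℝ)| ^ 2) = S := by
      rw [hS]; exact Finset.sum_congr rfl fun j _ => sq_abs _
    have h4 : ‖ξ‖ ^ 2 ≤ (∑ j, |(μ j : ℝ)| * ‖b j‖) ^ 2 :=
      pow_le_pow_left₀ (norm_nonneg _) h1 2
    rw [h3] at h2
    calc ‖ξ‖ ^ 2 ≤ S * M := h4.trans h2
      _ = M * S := mul_comm _ _
  have hS_le : 4 * Real.pi ^ 2 * S ≤ A * ‖ξ‖ ^ 2 := by
    have : ∀ j : Fin d, 4 * Real.pi ^ 2 * ((μ j : ℝ)) ^ 2 ≤ ‖a j‖ ^ 2 * ‖ξ‖ ^ 2 := by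
      intro j
      have h1 : |⟪a j, ξ⟫| ≤ ‖a j‖ * ‖ξ‖ := abs_real_inner_le_norm _ _
      have h2 : ⟪a j, ξ⟫ ^ 2 ≤ (‖a j‖ * ‖ξ‖) ^ 2 := by
        rw [← sq_abs]; exact pow_le_pow_left₀ (abs_nonneg _) h1 2
      rw [hinner j] at h2
      nlinarith
    calc 4 * Real.pi ^ 2 * S = ∑ j, 4 * Real.pi ^ 2 * ((μ j : ℝ)) ^ 2 := by
          rw [hS, Finset.mul_sum]
      _ ≤ ∑ j, ‖a j‖ ^ 2 * ‖ξ‖ ^ 2 := Finset.sum_le_sum fun j _ => this j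
      _ = A * ‖ξ‖ ^ 2 := by rw [hA, ← Finset.sum_mul]
  have hAnn : 0 ≤ A := Finset.sum_nonneg fun j _ => sq_nonneg _
  constructor
  · -- lower bound
    have hc1 : min 1 (16 / M) ≤ 1 := min_le_left _ _
    have hc2 : min 1 (16 / M) * M ≤ 16 := by
      calc min 1 (16 / M) * M ≤ (16 / M) * M :=
            mul_le_mul_of_nonneg_right (min_le_right _ _) hMpos.le
        _ = 16 := by field_simp
    have : min 1 (16 / M) * ‖ξ‖ ^ 2 ≤ 16 * S := by
      calc min 1 (16 / M) * ‖ξ‖ ^ 2 ≤ min 1 (16 / M) * (M * S) := by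
            exact mul_le_mul_of_nonneg_left hnorm_le (lt_min one_pos (by positivity)).le
        _ = (min 1 (16 / M) * M) * S := by ring
        _ ≤ 16 * S := mul_le_mul_of_nonneg_right hc2 hSnonneg
    nlinarith
  · -- upper bound
    have hnormsq : 0 ≤ ‖ξ‖ ^ 2 := sq_nonneg _
    nlinarith
end
end

section
/- Fourier characterization of discrete Sobolev norms: For every integer k ≥ 0 there exist constants c, C > 0, depending only on k and the lattice basis {a_j} (not on ε), such that for every ε = 1/n and every Ω_ε-periodic lattice function f : ε𝕃 → ℂ^m: c ‖f‖²_{ε,k} ≤ Σ_{ξ∈𝕃*_ε} (Λ²_ε(ξ))^k |f̂(ξ)|² ≤ C ‖f‖²_{ε,k}. -/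
open scoped RealInnerProductSpace BigOperators

noncomputable section

namespace DiscreteSobolevFourier

variable (d : ℕ)

/-- The lattice point `ε Σ_j m_j a_j ∈ Ω_ε`, for `ε = 1/n` and `m : Fin d → Fin n`. -/
def pt (n : ℕ) (a : Fin d → EuclideanSpace ℝ (Fin d)) (m : Fin d → Fin n) :
    EuclideanSpace ℝ (Fin d) :=
  (n : ℝ)⁻¹ • ∑ j, ((m j : ℕ) : ℝ) • a j

/-- Integer coordinates of the frequencies `ξ = Σ_j μ_j b_j ∈ 𝕃*_ε`. -/
def freqIdx (n : ℕ) : Finset (Fin d → ℤ) :=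
  Fintype.piFinset fun _ =>
    (Finset.Icc (-(n : ℤ)) (n : ℤ)).filter fun m => -(n : ℤ) ≤ 2 * m ∧ 2 * m < (n : ℤ)

/-- The discrete Fourier transform of a lattice function. -/
def dft (n : ℕ) {m' : ℕ} (a : Fin d → EuclideanSpace ℝ (Fin d))
    (f : EuclideanSpace ℝ (Fin d) → EuclideanSpace ℂ (Fin m'))
    (ξ : EuclideanSpace ℝ (Fin d)) : EuclideanSpace ℂ (Fin m') :=
  ((n : ℝ)⁻¹ ^ d * (2 * Real.pi) ^ (-(d : ℝ) / 2)) •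
    ∑ m : Fin d → Fin n, Complex.exp (-Complex.I * (⟪ξ, pt d n a m⟫ : ℝ)) • f (pt d n a m)

/-- Forward difference `D⁺_s g (x) = ε⁻¹ (g(x+εs) - g(x))`, `ε = 1/n`. -/
def fwdDiff (n : ℕ) (s : EuclideanSpace ℝ (Fin d)) {F : Type*} [AddCommGroup F] [Module ℝ F]
    (g : EuclideanSpace ℝ (Fin d) → F) : EuclideanSpace ℝ (Fin d) → F :=
  fun x => (n : ℝ) • (g (x + (n : ℝ)⁻¹ • s) - g x)

/-- Iterated difference `D^α = Π_j (D⁺_{a_j})^{α_j}` for a multi-index `α`. -/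
def Dalpha (n : ℕ) (a : Fin d → EuclideanSpace ℝ (Fin d)) (α : Fin d → ℕ)
    {F : Type*} [AddCommGroup F] [Module ℝ F]
    (g : EuclideanSpace ℝ (Fin d) → F) : EuclideanSpace ℝ (Fin d) → F :=
  Fin.foldr d (fun j h => (fwdDiff d n (a j))^[α j] h) g

/-- Multi-indices `α` with `|α| ≤ k`. -/
def multiIdx (k : ℕ) : Finset (Fin d → ℕ) :=
  (Fintype.piFinset fun _ => Finset.range (k + 1)).filter fun α => ∑ j, α j ≤ k

/-- Squared discrete Sobolev norm `‖f‖²_{ε,k} = Σ_{|α|≤k} ε^d Σ_{x∈Ω_ε} |D^α f(x)|²`. -/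
def sobNormSq (n : ℕ) (a : Fin d → EuclideanSpace ℝ (Fin d)) (k : ℕ) {m' : ℕ}
    (f : EuclideanSpace ℝ (Fin d) → EuclideanSpace ℂ (Fin m')) : ℝ :=
  ∑ α ∈ multiIdx d k, (n : ℝ)⁻¹ ^ d *
    ∑ m : Fin d → Fin n, ‖Dalpha d n a α f (pt d n a m)‖ ^ 2

/-- The discrete symbol `Λ²_ε(ξ) = 1 + Σ_j (4/ε²) sin²(ε a_j·ξ/2)`. -/
def lamSq (n : ℕ) (a : Fin d → EuclideanSpace ℝ (Fin d)) (ξ : EuclideanSpace ℝ (Fin d)) : ℝ :=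
  1 + ∑ j, 4 * (n : ℝ) ^ 2 * Real.sin (⟪a j, ξ⟫ / (2 * (n : ℝ))) ^ 2

/-!
On periodic lattice functions, summation over `Ω_ε` is invariant under the shift `x ↦ x + ε a_j`,
so the discrete Fourier transform diagonalises the forward differences: for `ξ ∈ 𝕃*`,
`(D⁺_{a_j} f)^(ξ) = ε⁻¹ (e^{iε a_j·ξ} - 1) f̂(ξ)`, a multiplier of squared modulus
`Λ²_{j,ε}(ξ) = 4 ε⁻² sin²(ε a_j·ξ/2)`. The characters `x ↦ e^{-iξ·x}`, `ξ ∈ 𝕃*_ε`, are orthogonal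
on `Ω_ε`, and Plancherel's identity turns `‖f‖²_{ε,k}` into
`(2π)^d Σ_ξ P(Λ²_{1,ε}(ξ), …, Λ²_{d,ε}(ξ)) |f̂(ξ)|²` with `P(L) = Σ_{|α| ≤ k} L^α`.
For `L ≥ 0` the polynomial `P(L)` is comparable to `(1 + Σ_j L_j)^k = Λ²_ε(ξ)^k`, with constants
`#{α : |α| ≤ k}` and `(d + 1)^k`.
-/

lemma sum_Ico_zpow_of_pow_eq_one {K : Type*} [Field K] [DecidableEq K] {n : ℕ} {w : K}
    (hw : w ^ n = 1) (a : ℤ) :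
    ∑ t ∈ Finset.Ico a (a + n), w ^ t = if w = 1 then (n : K) else 0 := by
  rcases Nat.eq_zero_or_pos n with rfl | hn
  · simp
  have hw0 : w ≠ 0 := by rintro rfl; simp [hn.ne'] at hw
  rw [Int.Ico_eq_finset_map, Finset.sum_map]
  simp only [add_sub_cancel_left, Int.toNat_natCast, Function.Embedding.trans_apply,
    Nat.castEmbedding_apply, addLeftEmbedding_apply, zpow_add₀ hw0, zpow_natCast,
    ← Finset.mul_sum]
  split_ifs with hw1
  · simp [hw1]
  · rw [geom_sum_eq hw1, hw, sub_self, zero_div, mul_zero]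

lemma sum_norm_sq_sum_smul_of_orthogonal {ι κ V : Type*} [Fintype κ] [DecidableEq κ]
    [NormedAddCommGroup V] [InnerProductSpace ℂ V] (s : Finset ι) (χ : ι → κ → ℂ) (c : ℝ)
    (hχ : ∀ m m', ∑ μ ∈ s, starRingEnd ℂ (χ μ m) * χ μ m' = if m = m' then (c : ℂ) else 0)
    (v : κ → V) :
    ∑ μ ∈ s, ‖∑ m, χ μ m • v m‖ ^ 2 = c * ∑ m, ‖v m‖ ^ 2 := by
  have hexpand : ∀ μ, inner ℂ (∑ m, χ μ m • v m) (∑ m', χ μ m' • v m') =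
      ∑ m, ∑ m', starRingEnd ℂ (χ μ m) * χ μ m' * inner ℂ (v m) (v m') := fun μ => by
    rw [sum_inner]
    simp only [inner_smul_left, inner_sum, inner_smul_right]
    exact Finset.sum_congr rfl fun m _ => Finset.sum_congr rfl fun m' _ => by ring
  have hinner : ∑ μ ∈ s, inner ℂ (∑ m, χ μ m • v m) (∑ m, χ μ m • v m) =
      c * ∑ m, inner ℂ (v m) (v m) := by
    calc _ = ∑ m, ∑ m', (∑ μ ∈ s, starRingEnd ℂ (χ μ m) * χ μ m') * inner ℂ (v m) (v m') := by
          simp only [hexpand]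
          rw [Finset.sum_comm]
          refine Finset.sum_congr rfl fun m _ => ?_
          rw [Finset.sum_comm]
          simp only [Finset.sum_mul]
      _ = _ := by simp [hχ, Finset.mul_sum]
  simp only [inner_self_eq_norm_sq_to_K] at hinner
  rw [← Complex.ofReal_inj]
  push_cast
  exact hinner

lemma iterate_of_map_eq_smul {X M R : Type*} [Monoid R] [MulAction R M] (P : X → Prop)
    (Φ : X → M) (T : X → X) (c : R) (hT : ∀ x, P x → P (T x) ∧ Φ (T x) = c • Φ x) (t : ℕ)
    {x : X} (hx : P x) : P (T^[t] x) ∧ Φ (T^[t] x) = c ^ t • Φ x := by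
  induction t with
  | zero => simpa using hx
  | succ t ih =>
    obtain ⟨hP, hΦ⟩ := hT _ ih.1
    rw [Function.iterate_succ_apply']
    exact ⟨hP, by rw [hΦ, ih.2, smul_smul, pow_succ']⟩

lemma foldr_of_map_eq_smul {X M R : Type*} [CommMonoid R] [MulAction R M] (P : X → Prop)
    (Φ : X → M) : ∀ {k : ℕ} (T : Fin k → X → X) (c : Fin k → R),
    (∀ i x, P x → P (T i x) ∧ Φ (T i x) = c i • Φ x) →
    ∀ {x : X}, P x → P (Fin.foldr k T x) ∧ Φ (Fin.foldr k T x) = (∏ i, c i) • Φ x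
  | 0, _, _, _, _, hx => by simpa using hx
  | k + 1, T, c, hT, _, hx => by
    obtain ⟨hP, hΦ⟩ :=
      foldr_of_map_eq_smul P Φ (fun i => T i.succ) (fun i => c i.succ) (fun i => hT i.succ) hx
    obtain ⟨hP', hΦ'⟩ := hT 0 _ hP
    rw [Fin.foldr_succ, Fin.prod_univ_succ]
    exact ⟨hP', by rw [hΦ', hΦ, smul_smul]⟩

section Monomials

variable {d}

lemma mem_multiIdx {k : ℕ} {α : Fin d → ℕ} : α ∈ multiIdx d k ↔ ∑ j, α j ≤ k := by
  simp only [multiIdx, Finset.mem_filter, Fintype.mem_piFinset, Finset.mem_range,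
    and_iff_right_iff_imp]
  intro h j
  have := Finset.single_le_sum (fun j _ => Nat.zero_le (α j)) (Finset.mem_univ j)
  omega

def monomialSum (k : ℕ) (L : Fin d → ℝ) : ℝ :=
  ∑ α ∈ multiIdx d k, ∏ j, L j ^ α j

lemma monomialSum_le (k : ℕ) {L : Fin d → ℝ} (hL : 0 ≤ L) :
    monomialSum k L ≤ (multiIdx d k).card * (1 + ∑ j, L j) ^ k := by
  have hLsum : ∀ j, L j ≤ ∑ j, L j := fun j =>
    Finset.single_le_sum (fun j _ => hL j) (Finset.mem_univ j)
  have hbase : 1 ≤ 1 + ∑ j, L j := le_add_of_nonneg_right (Finset.sum_nonneg fun j _ => hL j)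
  rw [monomialSum, ← nsmul_eq_mul]
  refine Finset.sum_le_card_nsmul _ _ _ fun α hα => ?_
  calc ∏ j, L j ^ α j ≤ ∏ j, (1 + ∑ j, L j) ^ α j :=
        Finset.prod_le_prod (fun j _ => pow_nonneg (hL j) _) fun j _ =>
          pow_le_pow_left₀ (hL j) (by linarith [hLsum j]) _
    _ = (1 + ∑ j, L j) ^ ∑ j, α j := Finset.prod_pow_eq_pow_sum _ _ _
    _ ≤ _ := pow_le_pow_right₀ hbase (mem_multiIdx.1 hα)

lemma one_add_sum_pow_le_monomialSum (k : ℕ) {L : Fin d → ℝ} (hL : 0 ≤ L) :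
    (1 + ∑ j, L j) ^ k ≤ (d + 1) ^ k * monomialSum k L := by
  have hP : ∀ α ∈ multiIdx d k, ∏ j, L j ^ α j ≤ monomialSum k L := fun _ hα =>
    Finset.single_le_sum (f := fun α : Fin d → ℕ => ∏ j, L j ^ α j)
      (fun α _ => Finset.prod_nonneg fun j _ => pow_nonneg (hL j) _) hα
  -- Both sides are controlled by the largest of `1, L 0, …`, which is itself a monomial.
  let t : Option (Fin d) → ℝ := fun o => o.elim 1 L
  obtain ⟨o, ho⟩ := Finite.exists_max t
  have hsum : 1 + ∑ j, L j ≤ (d + 1) * t o := by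
    have := Finset.sum_le_card_nsmul Finset.univ t (t o) fun x _ => ho x
    simpa [t, Fintype.sum_option, add_comm] using this
  have hto : t o ^ k ≤ monomialSum k L := by
    cases o with
    | none => simpa [t] using hP 0 (by simp [mem_multiIdx])
    | some j => simpa [t, Pi.single_apply] using hP (Pi.single j k) (by simp [mem_multiIdx])
  calc (1 + ∑ j, L j) ^ k ≤ ((d + 1) * t o) ^ k := by
        gcongr
        exact add_nonneg zero_le_one (Finset.sum_nonneg fun j _ => hL j)
    _ = (d + 1) ^ k * t o ^ k := mul_pow _ _ _
    _ ≤ _ := by gcongr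

end Monomials

section Characters

variable {E : Type*} [NormedAddCommGroup E] [InnerProductSpace ℝ E]

def expChar (ξ x : E) : ℂ :=
  Complex.exp (-Complex.I * (⟪ξ, x⟫ : ℝ))

lemma expChar_add (ξ x y : E) : expChar ξ (x + y) = expChar ξ x * expChar ξ y := by
  simp only [expChar, inner_add_right, Complex.ofReal_add, mul_add, Complex.exp_add]

lemma expChar_eq_exp_mul_expChar_add (ξ x y : E) :
    expChar ξ x = Complex.exp (Complex.I * (⟪ξ, y⟫ : ℝ)) * expChar ξ (x + y) := by
  rw [expChar_add, mul_left_comm, expChar, expChar, ← Complex.exp_add]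
  ring_nf
  rw [Complex.exp_zero, mul_one]

lemma conj_expChar_mul_expChar (ξ x y : E) :
    starRingEnd ℂ (expChar ξ x) * expChar ξ y = Complex.exp (Complex.I * (⟪ξ, x - y⟫ : ℝ)) := by
  rw [expChar, expChar, ← Complex.exp_conj, ← Complex.exp_add, inner_sub_right]
  simp only [map_mul, map_neg, Complex.conj_I, Complex.conj_ofReal, Complex.ofReal_sub]
  ring_nf

lemma periodic_expChar_smul {V : Type*} [AddCommGroup V] [Module ℂ V] {ξ c : E}
    (hξ : expChar ξ c = 1) {g : E → V} (hg : Function.Periodic g c) :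
    Function.Periodic (fun x => expChar ξ x • g x) c := fun x => by
  simp only [expChar_add, hξ, mul_one, hg x]

end Characters

section Differences

variable {d} {n : ℕ} {a : Fin d → EuclideanSpace ℝ (Fin d)}

lemma periodic_fwdDiff {F : Type*} [AddCommGroup F] [Module ℝ F]
    {g : EuclideanSpace ℝ (Fin d) → F} {c : EuclideanSpace ℝ (Fin d)}
    (hg : Function.Periodic g c) (s : EuclideanSpace ℝ (Fin d)) :
    Function.Periodic (fwdDiff d n s g) c := fun x => by
  simp only [fwdDiff, add_right_comm x c, hg x, hg (x + _)]

lemma pt_add_inv_smul [NeZero n] (m : Fin d → Fin n) (j : Fin d) :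
    pt d n a m + (n : ℝ)⁻¹ • a j =
      pt d n a (m + Pi.single j 1) + (((m j : ℕ) + 1) / n) • a j := by
  -- `(m j + 1) / n` is `1` exactly when the `j`-th coordinate wraps around.
  have hcoord : ∀ l, ((m l : ℕ) : ℝ) • a l + (if l = j then a j else 0) =
      ((((m + Pi.single j 1 : Fin d → Fin n)) l : ℕ) : ℝ) • a l +
        (if l = j then ((n : ℝ) * (((m j : ℕ) + 1) / n : ℕ)) • a j else 0) := by
    intro l
    by_cases h : l = j
    · subst h
      rw [if_pos rfl, if_pos rfl, ← add_smul, Pi.add_apply, Pi.single_eq_same, Fin.val_add,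
        Fin.val_one', Nat.add_mod_mod, ← Nat.cast_mul, ← Nat.cast_add, Nat.mod_add_div,
        Nat.cast_add_one, add_smul, one_smul]
    · simp [h]
  have hsum := Finset.sum_congr rfl fun l (_ : l ∈ Finset.univ) => hcoord l
  simp only [Finset.sum_add_distrib, Finset.sum_ite_eq', Finset.mem_univ, if_true] at hsum
  rw [pt, pt, ← smul_add, hsum, smul_add, smul_smul, inv_mul_cancel_left₀, Nat.cast_smul_eq_nsmul]
  exact_mod_cast (NeZero.ne n)

lemma sum_pt_add_inv_smul {V : Type*} [AddCommMonoid V] (hn : 0 < n)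
    {F : EuclideanSpace ℝ (Fin d) → V} {j : Fin d} (hF : Function.Periodic F (a j)) :
    ∑ m : Fin d → Fin n, F (pt d n a m + (n : ℝ)⁻¹ • a j) = ∑ m, F (pt d n a m) := by
  have : NeZero n := ⟨hn.ne'⟩
  simp only [pt_add_inv_smul, hF.nsmul _ _]
  exact Equiv.sum_comp (Equiv.addRight (Pi.single j 1)) fun m => F (pt d n a m)

def diffSymbol (n : ℕ) (s ξ : EuclideanSpace ℝ (Fin d)) : ℂ :=
  n * (Complex.exp (Complex.I * (⟪ξ, (n : ℝ)⁻¹ • s⟫ : ℝ)) - 1)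

lemma norm_diffSymbol_sq (n : ℕ) (s ξ : EuclideanSpace ℝ (Fin d)) :
    ‖diffSymbol n s ξ‖ ^ 2 = 4 * (n : ℝ) ^ 2 * Real.sin (⟪s, ξ⟫ / (2 * (n : ℝ))) ^ 2 := by
  rw [diffSymbol, norm_mul, Complex.norm_natCast, Complex.norm_exp_I_mul_ofReal_sub_one,
    real_inner_smul_right, real_inner_comm, Real.norm_eq_abs, mul_pow, sq_abs]
  ring_nf

lemma lamSq_eq_one_add_sum (n : ℕ) (a : Fin d → EuclideanSpace ℝ (Fin d))
    (ξ : EuclideanSpace ℝ (Fin d)) : lamSq d n a ξ = 1 + ∑ j, ‖diffSymbol n (a j) ξ‖ ^ 2 := by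
  simp only [lamSq, norm_diffSymbol_sq]

lemma dft_eq_sum_expChar {m' : ℕ} (g : EuclideanSpace ℝ (Fin d) → EuclideanSpace ℂ (Fin m'))
    (ξ : EuclideanSpace ℝ (Fin d)) :
    dft d n a g ξ = ((n : ℝ)⁻¹ ^ d * (2 * Real.pi) ^ (-(d : ℝ) / 2)) •
      ∑ m : Fin d → Fin n, expChar ξ (pt d n a m) • g (pt d n a m) :=
  rfl

lemma dft_fwdDiff (hn : 0 < n) {m' : ℕ} {ξ : EuclideanSpace ℝ (Fin d)} {j : Fin d}
    (hξ : expChar ξ (a j) = 1) {g : EuclideanSpace ℝ (Fin d) → EuclideanSpace ℂ (Fin m')}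
    (hg : Function.Periodic g (a j)) :
    dft d n a (fwdDiff d n (a j) g) ξ = diffSymbol n (a j) ξ • dft d n a g ξ := by
  have hshift : ∑ m : Fin d → Fin n, expChar ξ (pt d n a m) • g (pt d n a m + (n : ℝ)⁻¹ • a j) =
      Complex.exp (Complex.I * (⟪ξ, (n : ℝ)⁻¹ • a j⟫ : ℝ)) •
        ∑ m : Fin d → Fin n, expChar ξ (pt d n a m) • g (pt d n a m) := by
    rw [← sum_pt_add_inv_smul hn (periodic_expChar_smul hξ hg), Finset.smul_sum]
    refine Finset.sum_congr rfl fun m _ => ?_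
    rw [expChar_eq_exp_mul_expChar_add ξ (pt d n a m) ((n : ℝ)⁻¹ • a j), mul_smul]
  have hsum : ∑ m : Fin d → Fin n, expChar ξ (pt d n a m) • fwdDiff d n (a j) g (pt d n a m) =
      diffSymbol n (a j) ξ • ∑ m : Fin d → Fin n, expChar ξ (pt d n a m) • g (pt d n a m) := by
    simp only [fwdDiff, ← Complex.coe_smul, smul_comm (expChar ξ _), smul_sub, ← Finset.smul_sum,
      Finset.sum_sub_distrib, hshift, diffSymbol, mul_smul, sub_smul, one_smul]
    rfl
  rw [dft_eq_sum_expChar, dft_eq_sum_expChar, hsum, smul_comm]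

lemma dft_Dalpha (hn : 0 < n) {m' : ℕ} {ξ : EuclideanSpace ℝ (Fin d)}
    (hξ : ∀ j, expChar ξ (a j) = 1) (α : Fin d → ℕ)
    {g : EuclideanSpace ℝ (Fin d) → EuclideanSpace ℂ (Fin m')}
    (hg : ∀ j, Function.Periodic g (a j)) :
    dft d n a (Dalpha d n a α g) ξ = (∏ j, diffSymbol n (a j) ξ ^ α j) • dft d n a g ξ := by
  have hstep : ∀ j (h : EuclideanSpace ℝ (Fin d) → EuclideanSpace ℂ (Fin m')),
      (∀ l, Function.Periodic h (a l)) →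
        (∀ l, Function.Periodic (fwdDiff d n (a j) h) (a l)) ∧
          dft d n a (fwdDiff d n (a j) h) ξ = diffSymbol n (a j) ξ • dft d n a h ξ :=
    fun j h hh => ⟨fun l => periodic_fwdDiff (hh l) _, dft_fwdDiff hn (hξ j) (hh j)⟩
  exact (foldr_of_map_eq_smul (fun h => ∀ l, Function.Periodic h (a l)) (fun h => dft d n a h ξ)
    (fun j => (fwdDiff d n (a j))^[α j]) (fun j => diffSymbol n (a j) ξ ^ α j)
    (fun j _ hh => iterate_of_map_eq_smul (fun h => ∀ l, Function.Periodic h (a l))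
      (fun h => dft d n a h ξ) _ _ (hstep j) (α j) hh) hg).2

end Differences

lemma freqSet_eq_Ico (n : ℕ) :
    ((Finset.Icc (-(n : ℤ)) (n : ℤ)).filter fun m => -(n : ℤ) ≤ 2 * m ∧ 2 * m < (n : ℤ)) =
      Finset.Ico (-((n / 2 : ℕ) : ℤ)) (-((n / 2 : ℕ) : ℤ) + n) := by
  ext x
  simp only [Finset.mem_filter, Finset.mem_Icc, Finset.mem_Ico]
  omega

lemma sum_freqSet_zpow {n : ℕ} {ζ : ℂ} (hζ : IsPrimitiveRoot ζ n) (z : ℤ) :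
    ∑ t ∈ (Finset.Icc (-(n : ℤ)) (n : ℤ)).filter
        (fun m => -(n : ℤ) ≤ 2 * m ∧ 2 * m < (n : ℤ)), (ζ ^ z) ^ t =
      if (n : ℤ) ∣ z then (n : ℂ) else 0 := by
  have hpow : (ζ ^ z) ^ n = 1 := by rw [← zpow_natCast, ← zpow_mul, mul_comm, zpow_mul,
    zpow_natCast, hζ.pow_eq_one, one_zpow]
  rw [freqSet_eq_Ico, sum_Ico_zpow_of_pow_eq_one hpow]
  exact if_congr (hζ.zpow_eq_one_iff_dvd z) rfl rfl

lemma natCast_dvd_val_sub_val_iff {n : ℕ} {x y : Fin n} : (n : ℤ) ∣ (x : ℤ) - y ↔ x = y := by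
  refine ⟨fun h => Fin.ext ?_, fun h => by simp [h]⟩
  have := Int.eq_zero_of_abs_lt_dvd h (by rw [abs_lt]; omega)
  omega

def dualPt {d : ℕ} (b : Fin d → EuclideanSpace ℝ (Fin d)) (μ : Fin d → ℤ) :
    EuclideanSpace ℝ (Fin d) :=
  ∑ l, (μ l : ℝ) • b l

section DualLattice

variable {d} {n : ℕ} {a b : Fin d → EuclideanSpace ℝ (Fin d)}
  (hab : ∀ j k, ⟪a j, b k⟫ = if j = k then 2 * Real.pi else 0)
include hab

lemma inner_a_dualPt (j : Fin d) (μ : Fin d → ℤ) :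
    ⟪a j, dualPt b μ⟫ = 2 * Real.pi * μ j := by
  simp [dualPt, inner_sum, real_inner_smul_right, hab, mul_comm]

lemma expChar_dualPt_a (μ : Fin d → ℤ) (j : Fin d) :
    expChar (dualPt b μ) (a j) = 1 := by
  rw [expChar, real_inner_comm, inner_a_dualPt hab, Complex.exp_eq_one_iff]
  exact ⟨-μ j, by push_cast; ring⟩

lemma conj_expChar_dualPt_mul_expChar (μ : Fin d → ℤ) (m m' : Fin d → Fin n) :
    starRingEnd ℂ (expChar (dualPt b μ) (pt d n a m)) *
        expChar (dualPt b μ) (pt d n a m') =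
      ∏ l, (Complex.exp (2 * Real.pi * Complex.I / n) ^ ((m l : ℤ) - m' l)) ^ μ l := by
  have hinner : ⟪dualPt b μ, pt d n a m - pt d n a m'⟫ =
      ∑ l, ((μ l * ((m l : ℤ) - m' l) : ℤ) : ℝ) * (2 * Real.pi / n) := by
    simp only [pt, ← smul_sub, ← Finset.sum_sub_distrib, ← sub_smul, real_inner_smul_right,
      inner_sum, real_inner_comm (a _), inner_a_dualPt hab, Finset.mul_sum]
    refine Finset.sum_congr rfl fun l _ => ?_
    push_cast
    ring
  rw [conj_expChar_mul_expChar, hinner, Complex.ofReal_sum, Finset.mul_sum, Complex.exp_sum]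
  refine Finset.prod_congr rfl fun l _ => ?_
  rw [← zpow_mul, mul_comm _ (μ l), ← Complex.exp_int_mul]
  congr 1
  push_cast
  ring

lemma sum_freqIdx_conj_expChar_mul_expChar (hn : 0 < n) (m m' : Fin d → Fin n) :
    ∑ μ ∈ freqIdx d n, starRingEnd ℂ (expChar (dualPt b μ) (pt d n a m)) *
        expChar (dualPt b μ) (pt d n a m') =
      if m = m' then ((n ^ d : ℝ) : ℂ) else 0 := by
  simp only [conj_expChar_dualPt_mul_expChar hab, freqIdx, ← Finset.prod_univ_sum,
    sum_freqSet_zpow (Complex.isPrimitiveRoot_exp n hn.ne'), natCast_dvd_val_sub_val_iff,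
    Finset.prod_ite_zero]
  simp [funext_iff]

lemma plancherel (hn : 0 < n) {m' : ℕ}
    (g : EuclideanSpace ℝ (Fin d) → EuclideanSpace ℂ (Fin m')) :
    (n : ℝ)⁻¹ ^ d * ∑ m : Fin d → Fin n, ‖g (pt d n a m)‖ ^ 2 =
      (2 * Real.pi) ^ d * ∑ μ ∈ freqIdx d n, ‖dft d n a g (dualPt b μ)‖ ^ 2 := by
  have h2π : ((2 * Real.pi) ^ (-(d : ℝ) / 2)) ^ 2 = ((2 * Real.pi) ^ d)⁻¹ := by
    rw [← Real.rpow_natCast, ← Real.rpow_mul (by positivity), ← Real.rpow_natCast,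
      ← Real.rpow_neg (by positivity)]
    norm_num
  have hn' : (n : ℝ) ≠ 0 := by exact_mod_cast hn.ne'
  simp only [dft_eq_sum_expChar, norm_smul, mul_pow, ← Finset.mul_sum,
    sum_norm_sq_sum_smul_of_orthogonal _ _ _ (sum_freqIdx_conj_expChar_mul_expChar hab hn),
    Real.norm_eq_abs, sq_abs, h2π, inv_pow]
  field_simp

lemma sobNormSq_eq_sum_freqIdx (hn : 0 < n) (k : ℕ) {m' : ℕ}
    {f : EuclideanSpace ℝ (Fin d) → EuclideanSpace ℂ (Fin m')}
    (hf : ∀ j, Function.Periodic f (a j)) :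
    sobNormSq d n a k f = (2 * Real.pi) ^ d * ∑ μ ∈ freqIdx d n,
      monomialSum k (fun j => ‖diffSymbol n (a j) (dualPt b μ)‖ ^ 2) *
        ‖dft d n a f (dualPt b μ)‖ ^ 2 := by
  simp only [sobNormSq, plancherel hab hn, ← Finset.mul_sum, monomialSum, Finset.sum_mul]
  rw [Finset.sum_comm]
  congr 1
  refine Finset.sum_congr rfl fun μ _ => Finset.sum_congr rfl fun α _ => ?_
  rw [dft_Dalpha hn (expChar_dualPt_a hab μ) α hf, norm_smul, mul_pow, norm_prod,
    ← Finset.prod_pow]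
  simp only [norm_pow, ← pow_mul, mul_comm]

end DualLattice

theorem discrete_sobolev_fourier_equiv (m' : ℕ)
    (a b : Fin d → EuclideanSpace ℝ (Fin d))
    (hab : ∀ j k, ⟪a j, b k⟫ = if j = k then 2 * Real.pi else 0) (k : ℕ) :
    ∃ c C : ℝ, 0 < c ∧ 0 < C ∧
      ∀ n : ℕ, 0 < n →
        ∀ f : EuclideanSpace ℝ (Fin d) → EuclideanSpace ℂ (Fin m'),
          (∀ x, ∀ j, f (x + a j) = f x) →
          c * sobNormSq d n a k f ≤
              (∑ μ ∈ freqIdx d n, lamSq d n a (∑ j, (μ j : ℝ) • b j) ^ k *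
                ‖dft d n a f (∑ j, (μ j : ℝ) • b j)‖ ^ 2) ∧
            (∑ μ ∈ freqIdx d n, lamSq d n a (∑ j, (μ j : ℝ) • b j) ^ k *
                ‖dft d n a f (∑ j, (μ j : ℝ) • b j)‖ ^ 2) ≤
              C * sobNormSq d n a k f := by
  have hcard : (0 : ℝ) < (multiIdx d k).card :=
    Nat.cast_pos.2 (Finset.card_pos.2 ⟨0, by simp [mem_multiIdx]⟩)
  refine ⟨((2 * Real.pi) ^ d * (multiIdx d k).card)⁻¹, (d + 1) ^ k / (2 * Real.pi) ^ d,
    by positivity, by positivity, fun n hn f hf => ?_⟩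
  rw [sobNormSq_eq_sum_freqIdx hab hn k fun j x => hf x j]
  simp only [lamSq_eq_one_add_sum]
  have hL : ∀ μ : Fin d → ℤ, 0 ≤ fun j => ‖diffSymbol n (a j) (dualPt b μ)‖ ^ 2 :=
    fun μ j => sq_nonneg _
  have hw : ∀ μ, 0 ≤ ‖dft d n a f (dualPt b μ)‖ ^ 2 := fun μ => sq_nonneg _
  have hpos : (0 : ℝ) < (2 * Real.pi) ^ d := by positivity
  constructor
  · have hlow := Finset.sum_le_sum fun μ (_ : μ ∈ freqIdx d n) =>
      mul_le_mul_of_nonneg_right (monomialSum_le k (hL μ)) (hw μ)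
    simp only [mul_assoc, ← Finset.mul_sum] at hlow
    rwa [mul_inv_rev, mul_assoc, inv_mul_cancel_left₀ hpos.ne', inv_mul_le_iff₀ hcard]
  · have hhigh := Finset.sum_le_sum fun μ (_ : μ ∈ freqIdx d n) =>
      mul_le_mul_of_nonneg_right (one_add_sum_pow_le_monomialSum k (hL μ)) (hw μ)
    simp only [mul_assoc, ← Finset.mul_sum] at hhigh
    rwa [div_eq_mul_inv, mul_assoc, inv_mul_cancel_left₀ hpos.ne']

end DiscreteSobolevFourier
end
end

section
/- Interpolation bound for directional derivatives of the bond-length density: Let u : ℝ^d → ℝ^d be a smooth Ω-periodic function and s ∈ ℝ^d; define P(x) = |s + (s·∇)u(x)|². Then for k = 1, 2, 3 there is a constant C(s) depending only on s and d such that ‖(s·∇)^k P‖_{L∞} ≤ C(s) ( ‖u‖_{L∞} ‖∇^{k+2} u‖_{L∞} + ‖∇^{k+1} u‖_{L∞} ). -/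
open scoped BigOperators
open scoped ContDiff

noncomputable section

namespace BondDensity

/-- Directional derivative `(s·∇) g (x) = fderiv g x s` of a scalar function. -/
def dirD {d : ℕ} (s : EuclideanSpace ℝ (Fin d)) (g : EuclideanSpace ℝ (Fin d) → ℝ) :
    EuclideanSpace ℝ (Fin d) → ℝ :=
  fun x => fderiv ℝ g x s

/-- The bond-length density `P(x) = |s + (s·∇)u(x)|²`. -/
def P {d : ℕ} (s : EuclideanSpace ℝ (Fin d))
    (u : EuclideanSpace ℝ (Fin d) → EuclideanSpace ℝ (Fin d)) :
    EuclideanSpace ℝ (Fin d) → ℝ :=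
  fun x => ‖s + fderiv ℝ u x s‖ ^ 2

/-- `‖∇^m u‖_{L∞}`, realized via the iterated Fréchet derivative. -/
def supDeriv {d : ℕ} (m : ℕ)
    (u : EuclideanSpace ℝ (Fin d) → EuclideanSpace ℝ (Fin d)) : ℝ :=
  ⨆ x, ‖iteratedFDeriv ℝ m u x‖

lemma real_landau {x A B : ℝ} (hx : 0 ≤ x) (hA : 0 ≤ A) (hB : 0 ≤ B)
    (h : ∀ η : ℝ, 0 < η → x ≤ 2 * A / η + B * η) : x ^ 2 ≤ 9 * (A * B) := by
  have key : x ≤ 3 * Real.sqrt (A * B) := by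
    rcases eq_or_lt_of_le hB with hB0 | hBpos
    · -- B = 0
      have hx0 : x ≤ 0 := by
        by_contra hc
        push_neg at hc
        have hη : (0:ℝ) < (4 * A + 1) / x := by positivity
        have h1 := h _ hη
        rw [← hB0] at h1
        have h2 : x ≤ 2 * A / ((4 * A + 1) / x) := by simpa using h1
        have h3 : 2 * A / ((4 * A + 1) / x) = 2 * A * x / (4 * A + 1) := by
          field_simp
        rw [h3, le_div_iff₀ (by positivity)] at h2
        nlinarith [h2]
      have hx' : x = 0 := le_antisymm hx0 hx
      rw [hx']
      positivity
    · rcases eq_or_lt_of_le hA with hA0 | hApos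
      · have hx0 : x ≤ 0 := by
          by_contra hc
          push_neg at hc
          have hη : (0:ℝ) < x / (2 * B) := by positivity
          have h1 := h _ hη
          rw [← hA0] at h1
          have h2 : x ≤ B * (x / (2 * B)) := by simpa using h1
          have h3 : B * (x / (2 * B)) = x / 2 := by
            field_simp
          rw [h3] at h2
          nlinarith [h2]
        have hx' : x = 0 := le_antisymm hx0 hx
        rw [hx']
        positivity
      · have hsApos : 0 < Real.sqrt A := Real.sqrt_pos.mpr hApos
        have hsBpos : 0 < Real.sqrt B := Real.sqrt_pos.mpr hBpos
        have hsA : Real.sqrt A * Real.sqrt A = A := Real.mul_self_sqrt hA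
        have hsB : Real.sqrt B * Real.sqrt B = B := Real.mul_self_sqrt hB
        have hη : (0:ℝ) < Real.sqrt A / Real.sqrt B := by positivity
        have h1 := h _ hη
        have e1 : 2 * A / (Real.sqrt A / Real.sqrt B) = 2 * (Real.sqrt A * Real.sqrt B) := by
          rw [div_div_eq_mul_div, div_eq_iff hsApos.ne']
          linear_combination (-2 * Real.sqrt B) * hsA
        have e2 : B * (Real.sqrt A / Real.sqrt B) = Real.sqrt A * Real.sqrt B := by
          rw [mul_div_assoc', div_eq_iff hsBpos.ne']
          linear_combination (- Real.sqrt A) * hsB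
        rw [e1, e2] at h1
        rw [Real.sqrt_mul hA]
        linarith [h1]
  nlinarith [key, Real.sq_sqrt (mul_nonneg hA hB), Real.sqrt_nonneg (A*B), hx]

open Set in
lemma landau_step {F : Type*} [NormedAddCommGroup F] [NormedSpace ℝ F]
    {h : ℝ → F} (hh : ContDiff ℝ ∞ h) {A B : ℝ}
    (hA : ∀ t, ‖h t‖ ≤ A) (hB : ∀ t, ‖deriv^[2] h t‖ ≤ B) (t : ℝ) :
    ‖deriv h t‖ ^ 2 ≤ 9 * (A * B) := by
  have h1 : (1 : WithTop ℕ∞) ≤ ∞ := by exact_mod_cast (le_top : (1:ℕ∞) ≤ ⊤)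
  have hdh : ContDiff ℝ ∞ (deriv h) := (contDiff_infty_iff_deriv.mp hh).2
  have hdiff : Differentiable ℝ h := hh.differentiable (by simp)
  have hdiff1 : Differentiable ℝ (deriv h) := hdh.differentiable (by simp)
  have hA0 : 0 ≤ A := le_trans (norm_nonneg _) (hA 0)
  have hB0 : 0 ≤ B := le_trans (norm_nonneg _) (hB 0)
  refine real_landau (norm_nonneg _) hA0 hB0 (fun η hη => ?_)
  have hd2 : ∀ y : ℝ, HasDerivAt (deriv h) (deriv^[2] h y) y := by
    intro y
    rw [show deriv^[2] h y = deriv (deriv h) y by simp [Function.iterate_succ_apply']]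
    exact (hdiff1 y).hasDerivAt
  -- Lipschitz bound on deriv h over [t, t+η]
  have hlip : ∀ τ ∈ Icc t (t + η), ‖deriv h τ - deriv h t‖ ≤ B * η :=
    fun τ hτ => by
      have := norm_image_sub_le_of_norm_deriv_le_segment'
        (f := deriv h) (f' := deriv^[2] h) (a := t) (b := t + η)
        (fun y _ => (hd2 y).hasDerivWithinAt)
        (fun y _ => hB y) τ hτ
      calc ‖deriv h τ - deriv h t‖ ≤ B * (τ - t) := this
        _ ≤ B * η := by
            have := hτ.2
            nlinarith [hτ.1, hτ.2, hB0]
  -- Taylor bound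
  have htay : ‖(h (t + η) - (t + η) • deriv h t) - (h t - t • deriv h t)‖ ≤ B * η * η := by
    have := norm_image_sub_le_of_norm_deriv_le_segment'
      (f := fun τ => h τ - τ • deriv h t) (f' := fun τ => deriv h τ - deriv h t)
      (a := t) (b := t + η)
      (fun y _ => ((hdiff y).hasDerivAt.sub
        (by simpa using (hasDerivAt_id y).smul_const (deriv h t))).hasDerivWithinAt)
      (fun y hy => hlip y (Ico_subset_Icc_self hy))
      (t + η) (right_mem_Icc.mpr (by linarith))
    simpa using this.trans (by nlinarith [hB0])
  have hkey : η * ‖deriv h t‖ ≤ 2 * A + B * η * η := by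
    have e : (h (t + η) - (t + η) • deriv h t) - (h t - t • deriv h t)
        = (h (t + η) - h t) - η • deriv h t := by
      rw [add_smul]; abel
    rw [e] at htay
    have h5 : ‖η • deriv h t‖ - ‖h (t + η) - h t‖ ≤ B * η * η :=
      le_trans (by
        have := norm_sub_norm_le (h (t + η) - h t) (η • deriv h t)
        have := norm_sub_rev ((h (t + η) - h t)) (η • deriv h t)
        linarith [norm_sub_norm_le (η • deriv h t) (h (t + η) - h t),
          norm_sub_rev (h (t + η) - h t) (η • deriv h t)]) htay
    have h6 : ‖η • deriv h t‖ = η * ‖deriv h t‖ := by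
      rw [norm_smul, Real.norm_eq_abs, abs_of_pos hη]
    have h7 : ‖h (t + η) - h t‖ ≤ 2 * A :=
      le_trans (norm_sub_le _ _) (by linarith [hA (t + η), hA t])
    linarith
  have h8 : ‖deriv h t‖ ≤ (2 * A + B * η * η) / η := by
    rw [le_div_iff₀ hη]
    calc ‖deriv h t‖ * η = η * ‖deriv h t‖ := by ring
      _ ≤ 2 * A + B * η * η := hkey
  calc ‖deriv h t‖ ≤ (2 * A + B * η * η) / η := h8
    _ = 2 * A / η + B * η := by field_simp

variable {E F : Type*} [NormedAddCommGroup E] [NormedSpace ℝ E]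
  [NormedAddCommGroup F] [NormedSpace ℝ F]

lemma iteratedFDeriv_shift {f : E → F} (hf : ContDiff ℝ ∞ f) (v : E) :
    ∀ (m : ℕ) (x : E), iteratedFDeriv ℝ m (fun y => f (y + v)) x = iteratedFDeriv ℝ m f (x + v) := by
  intro m
  induction m with
  | zero => intro x; ext w; simp
  | succ m IH =>
    intro x
    have h1 : (1 : WithTop ℕ∞) ≤ ∞ := by exact_mod_cast (le_top : (1:ℕ∞) ≤ ⊤)
    have hdm : Differentiable ℝ (iteratedFDeriv ℝ m f) :=
      (hf.iteratedFDeriv_right (m := 1)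
        (by exact_mod_cast (le_top : (((1 + m : ℕ)) : ℕ∞) ≤ ⊤))).differentiable one_ne_zero
    have hIH : (iteratedFDeriv ℝ m fun y => f (y + v))
        = fun y => iteratedFDeriv ℝ m f (y + v) := funext IH
    rw [iteratedFDeriv_succ_eq_comp_left, iteratedFDeriv_succ_eq_comp_left]
    simp only [Function.comp_apply]
    congr 1
    have htr : HasFDerivAt (fun y : E => y + v) (ContinuousLinearMap.id ℝ E) x :=
      (hasFDerivAt_id x).add_const v
    have hcomp : HasFDerivAt (fun y => iteratedFDeriv ℝ m f (y + v))
        ((fderiv ℝ (iteratedFDeriv ℝ m f) (x + v)).comp (ContinuousLinearMap.id ℝ E)) x :=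
      ((hdm (x + v)).hasFDerivAt).comp x htr
    rw [hIH, hcomp.fderiv]
    ext w
    simp

lemma periodic_bounded {d : ℕ} (hd : 0 < d) {F : Type*} [NormedAddCommGroup F]
    {f : EuclideanSpace ℝ (Fin d) → F} (hf : Continuous f)
    {a : Fin d → EuclideanSpace ℝ (Fin d)} (ha : LinearIndependent ℝ a)
    (hper : ∀ x j, f (x + a j) = f x) :
    ∃ R : ℝ, ∀ x, ‖f x‖ ≤ R := by
  haveI : Nonempty (Fin d) := ⟨⟨0, hd⟩⟩
  -- integer periodicity
  have hz : ∀ (z : ℤ) (j : Fin d) (x), f (x + (z : ℝ) • a j) = f x := by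
    intro z j
    induction z using Int.induction_on with
    | zero => intro x; simp
    | succ n IH =>
      intro x
      have e : x + (((n:ℤ) + 1 : ℤ) : ℝ) • a j = (x + ((n:ℤ) : ℝ) • a j) + a j := by
        push_cast
        rw [add_smul, one_smul]
        abel
      rw [e, hper, IH]
    | pred n IH =>
      intro x
      have e : (x + ((-(n:ℤ) - 1 : ℤ) : ℝ) • a j) + a j = x + ((-(n:ℤ) : ℤ) : ℝ) • a j := by
        push_cast
        rw [sub_smul, one_smul]
        abel
      have h2 := hper (x + ((-(n:ℤ) - 1 : ℤ) : ℝ) • a j) j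
      rw [e] at h2
      rw [← h2]
      exact IH x
  have hsum : ∀ (n : Fin d → ℤ) (x), f (x + ∑ j, (n j : ℝ) • a j) = f x := by
    intro n x
    have : ∀ t : Finset (Fin d), ∀ y, f (y + ∑ j ∈ t, (n j : ℝ) • a j) = f y := by
      intro t
      induction t using Finset.induction_on with
      | empty => intro y; simp
      | insert _ _ hmem IH =>
        rename_i i t'
        intro y
        rw [Finset.sum_insert hmem,
          show y + ((n i : ℝ) • a i + ∑ j ∈ t', (n j : ℝ) • a j)
            = (y + (n i : ℝ) • a i) + ∑ j ∈ t', (n j : ℝ) • a j by abel,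
          IH, hz]
    exact this Finset.univ x
  -- basis
  let b : Module.Basis (Fin d) ℝ (EuclideanSpace ℝ (Fin d)) :=
    basisOfLinearIndependentOfCardEqFinrank ha (by simp)
  have hb : ⇑b = a := coe_basisOfLinearIndependentOfCardEqFinrank _ _
  -- compact fundamental set
  let K : Set (EuclideanSpace ℝ (Fin d)) :=
    (fun c : Fin d → ℝ => ∑ j, c j • a j) '' (Set.Icc 0 1)
  have hKcomp : IsCompact K :=
    (isCompact_Icc).image (by
      apply continuous_finset_sum
      intro j _
      exact (continuous_apply j).smul continuous_const)
  have hKne : K.Nonempty := ⟨_, ⟨0, ⟨le_refl _, zero_le_one⟩, rfl⟩⟩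
  obtain ⟨z, hzK, hmax⟩ := hKcomp.exists_isMaxOn hKne (hf.norm.continuousOn)
  refine ⟨‖f z‖, fun x => ?_⟩
  set c : Fin d → ℝ := fun j => b.repr x j with hc
  set y : EuclideanSpace ℝ (Fin d) := ∑ j, Int.fract (c j) • a j with hy
  have hyK : y ∈ K := ⟨fun j => Int.fract (c j),
    ⟨fun j => Int.fract_nonneg _, fun j => (Int.fract_lt_one _).le⟩, rfl⟩
  have hxy : x = y + ∑ j, ((⌊c j⌋ : ℝ)) • a j := by
    have hx : x = ∑ j, c j • a j := by
      conv_lhs => rw [← b.sum_repr x]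
      simp [hb, hc]
    rw [hx, hy, ← Finset.sum_add_distrib]
    congr 1
    funext j
    rw [← add_smul]
    congr 1
    rw [Int.fract]
    ring
  have : f x = f y := by rw [hxy, hsum]
  rw [this]
  exact hmax hyK


lemma line_deriv {E F : Type*} [NormedAddCommGroup E] [NormedSpace ℝ E]
    [NormedAddCommGroup F] [NormedSpace ℝ F] {h : E → F} (hh : ContDiff ℝ ∞ h)
    (s x : E) (m : ℕ) (t : ℝ) :
    deriv^[m] (fun τ : ℝ => h (x + τ • s)) t = iteratedFDeriv ℝ m h (x + t • s) (fun _ => s) := by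
  have hL : (fun τ : ℝ => h (x + τ • s))
      = (fun y => h (y + x)) ∘ (ContinuousLinearMap.toSpanSingleton ℝ s) := by
    funext τ
    simp [ContinuousLinearMap.toSpanSingleton_apply, add_comm]
  have hshift : ContDiff ℝ ∞ (fun y : E => h (y + x)) :=
    hh.comp (contDiff_id.add contDiff_const)
  rw [← iteratedDeriv_eq_iterate, iteratedDeriv_eq_iteratedFDeriv, hL,
    ContinuousLinearMap.iteratedFDeriv_comp_right _ hshift _
      (by exact_mod_cast (le_top : ((m:ℕ∞)) ≤ ⊤)),
    ContinuousMultilinearMap.compContinuousLinearMap_apply]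
  rw [iteratedFDeriv_shift hh x m, ContinuousLinearMap.toSpanSingleton_apply, add_comm (t • s) x]
  simp [ContinuousLinearMap.toSpanSingleton_apply]

lemma iter_dirD {d : ℕ} (s : EuclideanSpace ℝ (Fin d)) :
    ∀ (k : ℕ) (g : EuclideanSpace ℝ (Fin d) → ℝ), ContDiff ℝ ∞ g →
      ∀ (x : EuclideanSpace ℝ (Fin d)) (t : ℝ),
      (dirD s)^[k] g (x + t • s) = deriv^[k] (fun τ => g (x + τ • s)) t := by
  intro k
  induction k with
  | zero => intro g hg x t; simp
  | succ k IH =>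
    intro g hg x t
    have h1 : (1 : WithTop ℕ∞) ≤ ∞ := by exact_mod_cast (le_top : (1:ℕ∞) ≤ ⊤)
    have hdg : ContDiff ℝ ∞ (dirD s g) :=
      (hg.fderiv_right (by exact_mod_cast (le_top : ((⊤:ℕ∞) + 1 : ℕ∞) ≤ ⊤))).clm_apply
        contDiff_const
    rw [Function.iterate_succ_apply, IH (dirD s g) hdg x t]
    have hfun : (fun τ : ℝ => dirD s g (x + τ • s)) = deriv (fun τ => g (x + τ • s)) := by
      funext τ
      have hc : HasDerivAt (fun τ : ℝ => x + τ • s) s τ := by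
        simpa using ((hasDerivAt_id τ).smul_const s).const_add x
      have hD := ((hg.differentiable (by simp)) (x + τ • s)).hasFDerivAt.comp_hasDerivAt τ hc
      have hD' : HasDerivAt (fun τ : ℝ => g (x + τ • s)) ((fderiv ℝ g (x + τ • s)) s) τ := hD
      rw [hD'.deriv]
      rfl
    rw [hfun, ← Function.iterate_succ_apply]


lemma cancel_sq {p c : ℝ} (hp : 0 ≤ p) (hc : 0 ≤ c) (h : p^2 ≤ c * p) : p ≤ c := by
  rcases eq_or_lt_of_le hp with h0 | h0
  · rw [← h0]; exact hc
  · exact le_of_mul_le_mul_right (by nlinarith [h]) h0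

lemma chain_a {N : ℕ → ℝ} (h0 : ∀ m, 0 ≤ N m)
    (hL : ∀ m, N (m+1)^2 ≤ 9 * (N m * N (m+2))) (m : ℕ) :
    N (m+1) * N (m+2) ≤ 81 * (N m * N (m+3)) := by
  apply cancel_sq (mul_nonneg (h0 _) (h0 _))
    (by nlinarith [mul_nonneg (h0 m) (h0 (m+3))])
  calc (N (m+1) * N (m+2))^2 = N (m+1)^2 * N (m+2)^2 := by ring
    _ ≤ (9 * (N m * N (m+2))) * (9 * (N (m+1) * N (m+3))) := by
        apply mul_le_mul (hL m) ?_ (sq_nonneg _)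
          (by nlinarith [mul_nonneg (h0 m) (h0 (m+2))])
        have := hL (m+1)
        convert this using 3 <;> omega
    _ = (81 * (N m * N (m+3))) * (N (m+1) * N (m+2)) := by ring

lemma chain_b {N : ℕ → ℝ} (h0 : ∀ m, 0 ≤ N m)
    (hL : ∀ m, N (m+1)^2 ≤ 9 * (N m * N (m+2))) (m : ℕ) :
    N (m+1) * N (m+3) ≤ 729 * (N m * N (m+4)) := by
  apply cancel_sq (mul_nonneg (h0 _) (h0 _))
    (by nlinarith [mul_nonneg (h0 m) (h0 (m+4))])
  have hL1 := hL (m+1)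
  have e2 : N (m+1+1) = N (m+2) := by norm_num
  have e3 : N (m+1+2) = N (m+3) := by norm_num
  rw [e2, e3] at hL1
  have hL2 := hL (m+2)
  have e4 : N (m+2+1) = N (m+3) := by norm_num
  have e5 : N (m+2+2) = N (m+4) := by norm_num
  rw [e4, e5] at hL2
  calc (N (m+1) * N (m+3))^2 = N (m+1)^2 * N (m+3)^2 := by ring
    _ ≤ (9 * (N m * N (m+2))) * (9 * (N (m+2) * N (m+4))) := by
        apply mul_le_mul (hL m) hL2 (sq_nonneg _)
          (by nlinarith [mul_nonneg (h0 m) (h0 (m+2))])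
    _ = (81 * (N m * N (m+4))) * (N (m+2))^2 := by ring
    _ ≤ (81 * (N m * N (m+4))) * (9 * (N (m+1) * N (m+3))) := by
        apply mul_le_mul_of_nonneg_left hL1
        nlinarith [mul_nonneg (h0 m) (h0 (m+4))]
    _ = (729 * (N m * N (m+4))) * (N (m+1) * N (m+3)) := by ring

lemma chain_c {N : ℕ → ℝ} (h0 : ∀ m, 0 ≤ N m)
    (hL : ∀ m, N (m+1)^2 ≤ 9 * (N m * N (m+2))) :
    N 2^2 ≤ 6561 * (N 0 * N 4) := by
  have h1 := hL 1
  have h2 := chain_b h0 hL 0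
  norm_num at h1 h2 ⊢
  nlinarith [h1, h2]

lemma chain_d {N : ℕ → ℝ} (h0 : ∀ m, 0 ≤ N m)
    (hL : ∀ m, N (m+1)^2 ≤ 9 * (N m * N (m+2))) :
    N 1 * N 4 ≤ 6561 * (N 0 * N 5) := by
  apply cancel_sq (mul_nonneg (h0 _) (h0 _))
    (by nlinarith [mul_nonneg (h0 0) (h0 5)])
  have hL0 := hL 0
  have hL3 := hL 3
  norm_num at hL0 hL3
  have ha1 := chain_a h0 hL 1
  norm_num at ha1
  calc (N 1 * N 4)^2 = N 1^2 * N 4^2 := by ring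
    _ ≤ (9 * (N 0 * N 2)) * (9 * (N 3 * N 5)) := by
        apply mul_le_mul hL0 hL3 (sq_nonneg _) (by nlinarith [mul_nonneg (h0 0) (h0 2)])
    _ = (81 * (N 0 * N 5)) * (N 2 * N 3) := by ring
    _ ≤ (81 * (N 0 * N 5)) * (81 * (N 1 * N 4)) := by
        apply mul_le_mul_of_nonneg_left ha1
        nlinarith [mul_nonneg (h0 0) (h0 5)]
    _ = (6561 * (N 0 * N 5)) * (N 1 * N 4) := by ring

lemma chain_e {N : ℕ → ℝ} (h0 : ∀ m, 0 ≤ N m)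
    (hL : ∀ m, N (m+1)^2 ≤ 9 * (N m * N (m+2))) :
    N 2 * N 3 ≤ 531441 * (N 0 * N 5) := by
  have ha1 := chain_a h0 hL 1
  have hd := chain_d h0 hL
  norm_num at ha1
  calc N 2 * N 3 ≤ 81 * (N 1 * N 4) := ha1
    _ ≤ 81 * (6561 * (N 0 * N 5)) := by
        apply mul_le_mul_of_nonneg_left hd (by norm_num)
    _ = 531441 * (N 0 * N 5) := by ring

lemma chain_ab {N : ℕ → ℝ} (h0 : ∀ m, 0 ≤ N m)
    (hL : ∀ m, N (m+1)^2 ≤ 9 * (N m * N (m+2))) :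
    N 1 * N 2 ≤ 81 * (N 0 * N 3) := by
  have := chain_a h0 hL 0
  norm_num at this
  exact this

lemma chain_bb {N : ℕ → ℝ} (h0 : ∀ m, 0 ≤ N m)
    (hL : ∀ m, N (m+1)^2 ≤ 9 * (N m * N (m+2))) :
    N 1 * N 3 ≤ 729 * (N 0 * N 4) := by
  have := chain_b h0 hL 0
  norm_num at this
  exact this

set_option maxHeartbeats 1600000 in
/-- **Interpolation bound for directional derivatives of the bond-length density.**
For a smooth `Ω`-periodic `u : ℝ^d → ℝ^d` and `s ∈ ℝ^d`, with `P(x) = |s + (s·∇)u(x)|²`,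
for `k = 1, 2, 3` one has
`‖(s·∇)^k P‖_{L∞} ≤ C(s) (‖u‖_{L∞} ‖∇^{k+2}u‖_{L∞} + ‖∇^{k+1}u‖_{L∞})`,
with `C(s)` depending only on `s` and `d`. -/
theorem dir_deriv_bond_density_bound (d : ℕ) (hd : 0 < d)
    (s : EuclideanSpace ℝ (Fin d)) :
    ∃ C : ℝ, 0 < C ∧
      ∀ (a : Fin d → EuclideanSpace ℝ (Fin d)), LinearIndependent ℝ a →
        ∀ u : EuclideanSpace ℝ (Fin d) → EuclideanSpace ℝ (Fin d),
          ContDiff ℝ (⊤ : ℕ∞) u → (∀ x, ∀ j, u (x + a j) = u x) →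
          ∀ k : ℕ, 1 ≤ k → k ≤ 3 →
            ∀ x, |(dirD s)^[k] (P s u) x| ≤
              C * ((⨆ z, ‖u z‖) * supDeriv (k + 2) u + supDeriv (k + 1) u) := by
  classical
  refine ⟨(10:ℝ)^7 * (1 + ‖s‖)^5, by positivity, ?_⟩
  intro a ha u hu hper k hk1 hk3 x
  have h1 : (1 : WithTop ℕ∞) ≤ ∞ := by exact_mod_cast (le_top : (1:ℕ∞) ≤ ⊤)
  have hu' : ContDiff ℝ ∞ u := hu.of_le (by simp)
  have hbdd : ∀ m : ℕ, ∃ R, ∀ y, ‖iteratedFDeriv ℝ m u y‖ ≤ R := by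
    intro m
    refine periodic_bounded hd ?_ ha ?_
    · exact (hu'.iteratedFDeriv_right (m := 0)
        (by exact_mod_cast (le_top : ((0 + m : ℕ) : ℕ∞) ≤ ⊤))).continuous
    · intro y j
      rw [← iteratedFDeriv_shift hu' (a j) m y]
      congr 1
      funext z
      exact hper z j
  have hMb : ∀ m : ℕ, BddAbove (Set.range fun y => ‖iteratedFDeriv ℝ m u y‖) := by
    intro m; obtain ⟨R, hR⟩ := hbdd m
    exact ⟨R, by rintro _ ⟨y, rfl⟩; exact hR y⟩
  have hMle : ∀ (m : ℕ) (y : EuclideanSpace ℝ (Fin d)),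
      ‖iteratedFDeriv ℝ m u y‖ ≤ supDeriv m u :=
    fun m y => le_ciSup (hMb m) y
  have hMnn : ∀ m : ℕ, 0 ≤ supDeriv m u := fun m => Real.iSup_nonneg fun y => norm_nonneg _
  set N : ℕ → ℝ := fun m => ⨆ y, ‖iteratedFDeriv ℝ m u y (fun _ => s)‖ with hNdef
  have hprod : ∀ m : ℕ, (∏ _i : Fin m, ‖s‖) = ‖s‖ ^ m := by simp
  have hNb : ∀ m : ℕ,
      BddAbove (Set.range fun y => ‖iteratedFDeriv ℝ m u y (fun _ => s)‖) := by
    intro m; obtain ⟨R, hR⟩ := hbdd m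
    refine ⟨R * ‖s‖ ^ m, ?_⟩
    rintro _ ⟨y, rfl⟩
    calc ‖iteratedFDeriv ℝ m u y fun _ => s‖
        ≤ ‖iteratedFDeriv ℝ m u y‖ * ∏ _i : Fin m, ‖s‖ :=
          ContinuousMultilinearMap.le_opNorm _ _
      _ = ‖iteratedFDeriv ℝ m u y‖ * ‖s‖ ^ m := by rw [hprod]
      _ ≤ R * ‖s‖ ^ m := mul_le_mul_of_nonneg_right (hR y) (by positivity)
  have hNle : ∀ (m : ℕ) (y : EuclideanSpace ℝ (Fin d)),
      ‖iteratedFDeriv ℝ m u y (fun _ => s)‖ ≤ N m :=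
    fun m y => le_ciSup (hNb m) y
  have hNnn : ∀ m : ℕ, 0 ≤ N m := fun m => Real.iSup_nonneg fun y => norm_nonneg _
  have hNM : ∀ m : ℕ, N m ≤ ‖s‖ ^ m * supDeriv m u := by
    intro m
    apply ciSup_le
    intro y
    calc ‖iteratedFDeriv ℝ m u y fun _ => s‖
        ≤ ‖iteratedFDeriv ℝ m u y‖ * ∏ _i : Fin m, ‖s‖ :=
          ContinuousMultilinearMap.le_opNorm _ _
      _ = ‖iteratedFDeriv ℝ m u y‖ * ‖s‖ ^ m := by rw [hprod]
      _ ≤ supDeriv m u * ‖s‖ ^ m := mul_le_mul_of_nonneg_right (hMle m y) (by positivity)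
      _ = ‖s‖ ^ m * supDeriv m u := by ring
  have hN0A : N 0 = ⨆ z, ‖u z‖ := by
    rw [hNdef]
    simp only [iteratedFDeriv_zero_apply]
  have hA0 : (0:ℝ) ≤ ⨆ z, ‖u z‖ := Real.iSup_nonneg fun z => norm_nonneg _
  -- Landau chain
  have hLan : ∀ m : ℕ, N (m+1)^2 ≤ 9 * (N m * N (m+2)) := by
    intro m
    have key : ∀ y, ‖iteratedFDeriv ℝ (m+1) u y (fun _ => s)‖^2 ≤ 9 * (N m * N (m+2)) := by
      intro y
      have hgy : ContDiff ℝ ∞ (fun τ : ℝ => u (y + τ • s)) :=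
        hu'.comp (contDiff_const.add (contDiff_id.smul contDiff_const))
      have hgm : ContDiff ℝ ∞ (deriv^[m] (fun τ : ℝ => u (y + τ • s))) :=
        hgy.iterate_deriv m
      have hA : ∀ t, ‖deriv^[m] (fun τ : ℝ => u (y + τ • s)) t‖ ≤ N m := fun t => by
        rw [line_deriv hu' s y m t]; exact hNle m _
      have hB : ∀ t, ‖deriv^[2] (deriv^[m] (fun τ : ℝ => u (y + τ • s))) t‖ ≤ N (m+2) := by
        intro t
        rw [← Function.iterate_add_apply deriv 2 m, show 2 + m = m + 2 from by omega,
          line_deriv hu' s y (m+2) t]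
        exact hNle (m+2) _
      have hstep := landau_step hgm hA hB 0
      rw [← Function.iterate_succ_apply' deriv m, line_deriv hu' s y (m+1) 0] at hstep
      simpa using hstep
    have hsq : N (m+1) ≤ Real.sqrt (9 * (N m * N (m+2))) := by
      apply ciSup_le
      intro y
      calc ‖iteratedFDeriv ℝ (m+1) u y fun _ => s‖
          = Real.sqrt ((‖iteratedFDeriv ℝ (m+1) u y fun _ => s‖)^2) :=
            (Real.sqrt_sq (norm_nonneg _)).symm
        _ ≤ Real.sqrt (9 * (N m * N (m+2))) := Real.sqrt_le_sqrt (key y)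
    calc N (m+1)^2 ≤ (Real.sqrt (9 * (N m * N (m+2))))^2 :=
          pow_le_pow_left₀ (hNnn (m+1)) hsq 2
      _ = 9 * (N m * N (m+2)) :=
          Real.sq_sqrt (by nlinarith [mul_nonneg (hNnn m) (hNnn (m+2))])
  -- smoothness of P
  have hP : ContDiff ℝ ∞ (P s u) := by
    have hin : ContDiff ℝ ∞ (fun y => s + fderiv ℝ u y s) :=
      contDiff_const.add ((hu'.fderiv_right
        (by exact_mod_cast (le_top : ((⊤:ℕ∞) + 1 : ℕ∞) ≤ ⊤))).clm_apply contDiff_const)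
    exact ContDiff.norm_sq (𝕜 := ℝ) hin
  -- the curve at x
  set g : ℝ → EuclideanSpace ℝ (Fin d) := fun τ => u (x + τ • s) with hgdef
  have hg : ContDiff ℝ ∞ g := hu'.comp (contDiff_const.add (contDiff_id.smul contDiff_const))
  have hgd : ∀ (m : ℕ) (t : ℝ), HasDerivAt (deriv^[m] g) (deriv^[m+1] g t) t := by
    intro m t
    have hdm : DifferentiableAt ℝ (deriv^[m] g) t := ((hg.iterate_deriv m).differentiable (by simp)) t
    rw [Function.iterate_succ_apply' deriv m g]
    exact hdm.hasDerivAt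
  have hv : ∀ (m : ℕ) (t : ℝ), ‖deriv^[m] g t‖ ≤ N m := by
    intro m t
    rw [hgdef, line_deriv hu' s x m t]
    exact hNle m _
  set w : ℝ → EuclideanSpace ℝ (Fin d) := fun t => s + deriv^[1] g t with hwdef
  have hw : ∀ t, HasDerivAt w (deriv^[2] g t) t := fun t => (hgd 1 t).const_add s
  have hwb : ∀ t, ‖w t‖ ≤ ‖s‖ + N 1 := fun t =>
    (norm_add_le _ _).trans (add_le_add le_rfl (hv 1 t))
  have hsN1 : (0:ℝ) ≤ ‖s‖ + N 1 := add_nonneg (norm_nonneg s) (hNnn 1)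
  set f : ℝ → ℝ := fun t => P s u (x + t • s) with hfdef
  have hfw : f = fun t => (inner ℝ (w t) (w t) : ℝ) := by
    funext t
    have hfd : fderiv ℝ u (x + t • s) s = deriv^[1] g t := by
      rw [hgdef, line_deriv hu' s x 1 t, iteratedFDeriv_one_apply]
    rw [hfdef, hwdef]
    simp only [P]
    rw [real_inner_self_eq_norm_sq, hfd]
  set D1 : ℝ → ℝ := fun t =>
    (inner ℝ (w t) (deriv^[2] g t) : ℝ) + (inner ℝ (deriv^[2] g t) (w t) : ℝ) with hD1def
  have hf1 : ∀ t, HasDerivAt f (D1 t) t := fun t => by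
    rw [hfw]; exact (hw t).inner ℝ (hw t)
  have hder1 : deriv f = D1 := funext fun t => (hf1 t).deriv
  set D2 : ℝ → ℝ := fun t =>
    ((inner ℝ (w t) (deriv^[3] g t) : ℝ) + (inner ℝ (deriv^[2] g t) (deriv^[2] g t) : ℝ)) +
    ((inner ℝ (deriv^[2] g t) (deriv^[2] g t) : ℝ) + (inner ℝ (deriv^[3] g t) (w t) : ℝ)) with hD2def
  have hf2 : ∀ t, HasDerivAt D1 (D2 t) t := fun t =>
    ((hw t).inner ℝ (hgd 2 t)).add ((hgd 2 t).inner ℝ (hw t))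
  have hder2 : deriv^[2] f = D2 := by
    have e : deriv^[2] f = deriv (deriv^[1] f) := Function.iterate_succ_apply' deriv 1 f
    rw [e, Function.iterate_one, hder1]
    exact funext fun t => (hf2 t).deriv
  set D3 : ℝ → ℝ := fun t =>
    (((inner ℝ (w t) (deriv^[4] g t) : ℝ) + (inner ℝ (deriv^[2] g t) (deriv^[3] g t) : ℝ)) +
     ((inner ℝ (deriv^[2] g t) (deriv^[3] g t) : ℝ) + (inner ℝ (deriv^[3] g t) (deriv^[2] g t) : ℝ))) +
    (((inner ℝ (deriv^[2] g t) (deriv^[3] g t) : ℝ) + (inner ℝ (deriv^[3] g t) (deriv^[2] g t) : ℝ)) +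
     ((inner ℝ (deriv^[3] g t) (deriv^[2] g t) : ℝ) + (inner ℝ (deriv^[4] g t) (w t) : ℝ))) with hD3def
  have hf3 : ∀ t, HasDerivAt D2 (D3 t) t := fun t =>
    ((((hw t).inner ℝ (hgd 3 t)).add ((hgd 2 t).inner ℝ (hgd 2 t)))).add
      ((((hgd 2 t).inner ℝ (hgd 2 t))).add (((hgd 3 t)).inner ℝ (hw t)))
  have hder3 : deriv^[3] f = D3 := by
    have e : deriv^[3] f = deriv (deriv^[2] f) := Function.iterate_succ_apply' deriv 2 f
    rw [e, hder2]
    exact funext fun t => (hf3 t).deriv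
  -- identification of the iterated directional derivative
  have hiter : ∀ k' : ℕ, (dirD s)^[k'] (P s u) x = deriv^[k'] f 0 := by
    intro k'
    have h := iter_dirD s k' (P s u) hP x 0
    simpa [hfdef] using h
  -- power bounds
  have hsb : ∀ j : ℕ, j ≤ 5 → ‖s‖^j ≤ (1+‖s‖)^5 := by
    intro j hj
    calc ‖s‖^j ≤ (1+‖s‖)^j :=
          pow_le_pow_left₀ (norm_nonneg s) (by linarith [norm_nonneg s]) j
      _ ≤ (1+‖s‖)^5 := pow_le_pow_right₀ (by linarith [norm_nonneg s]) hj
  interval_cases k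
  · -- k = 1
    have habs : |D1 0| ≤ 2*((‖s‖ + N 1) * N 2) := by
      rw [hD1def]
      calc |(inner ℝ (w 0) (deriv^[2] g 0) : ℝ) + (inner ℝ (deriv^[2] g 0) (w 0) : ℝ)|
          ≤ |(inner ℝ (w 0) (deriv^[2] g 0) : ℝ)| + |(inner ℝ (deriv^[2] g 0) (w 0) : ℝ)| :=
            abs_add_le _ _
        _ ≤ ‖w 0‖ * ‖deriv^[2] g 0‖ + ‖deriv^[2] g 0‖ * ‖w 0‖ :=
            add_le_add (abs_real_inner_le_norm _ _) (abs_real_inner_le_norm _ _)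
        _ ≤ (‖s‖ + N 1) * N 2 + N 2 * (‖s‖ + N 1) :=
            add_le_add (mul_le_mul (hwb 0) (hv 2 0) (norm_nonneg _) hsN1)
              (mul_le_mul (hv 2 0) (hwb 0) (norm_nonneg _) (hNnn 2))
        _ = 2*((‖s‖ + N 1) * N 2) := by ring
    have h3 : N 0 * N 3 ≤ (⨆ z, ‖u z‖) * (‖s‖^3 * supDeriv 3 u) := by
      rw [hN0A]
      exact mul_le_mul_of_nonneg_left (hNM 3) hA0
    have hc : N 1 * N 2 ≤ 81 * (N 0 * N 3) := chain_ab hNnn hLan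
    have t2 : ‖s‖^3 * supDeriv 2 u ≤ (1+‖s‖)^5 * supDeriv 2 u :=
      mul_le_mul_of_nonneg_right (hsb 3 (by norm_num)) (hMnn 2)
    have t3 : (⨆ z, ‖u z‖) * (‖s‖^3 * supDeriv 3 u)
        ≤ (⨆ z, ‖u z‖) * ((1+‖s‖)^5 * supDeriv 3 u) :=
      mul_le_mul_of_nonneg_left
        (mul_le_mul_of_nonneg_right (hsb 3 (by norm_num)) (hMnn 3)) hA0
    have hb2 : N 2 ≤ ‖s‖^2 * supDeriv 2 u := hNM 2
    have p1 : 0 ≤ (1+‖s‖)^5 * supDeriv 2 u := mul_nonneg (by positivity) (hMnn 2)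
    have p2 : 0 ≤ (⨆ z, ‖u z‖) * ((1+‖s‖)^5 * supDeriv 3 u) :=
      mul_nonneg hA0 (mul_nonneg (by positivity) (hMnn 3))
    rw [hiter 1, Function.iterate_one, hder1]
    calc |D1 0| ≤ 2*((‖s‖ + N 1) * N 2) := habs
      _ = 2*‖s‖*N 2 + 2*(N 1*N 2) := by ring
      _ ≤ 2*‖s‖*(‖s‖^2*supDeriv 2 u) + 2*(81*(N 0*N 3)) := by
          apply add_le_add
          · exact mul_le_mul_of_nonneg_left hb2 (by positivity)
          · exact mul_le_mul_of_nonneg_left hc (by norm_num)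
      _ ≤ 2*‖s‖*(‖s‖^2*supDeriv 2 u) + 162*((⨆ z, ‖u z‖)*(‖s‖^3*supDeriv 3 u)) := by
          linarith [h3]
      _ ≤ (10:ℝ)^7*(1+‖s‖)^5*((⨆ z, ‖u z‖)*supDeriv 3 u + supDeriv 2 u) := by
          nlinarith [t2, t3, p1, p2, hMnn 2, hMnn 3, hA0]
  · -- k = 2
    have hip : ∀ (p q : ℕ) (t : ℝ),
        |(inner ℝ (deriv^[p] g t) (deriv^[q] g t) : ℝ)| ≤ N p * N q := fun p q t =>
      (abs_real_inner_le_norm _ _).trans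
        (mul_le_mul (hv p t) (hv q t) (norm_nonneg _) (hNnn p))
    have hipw : ∀ (q : ℕ) (t : ℝ),
        |(inner ℝ (w t) (deriv^[q] g t) : ℝ)| ≤ (‖s‖ + N 1) * N q := fun q t =>
      (abs_real_inner_le_norm _ _).trans
        (mul_le_mul (hwb t) (hv q t) (norm_nonneg _) hsN1)
    have hipw' : ∀ (q : ℕ) (t : ℝ),
        |(inner ℝ (deriv^[q] g t) (w t) : ℝ)| ≤ N q * (‖s‖ + N 1) := fun q t =>
      (abs_real_inner_le_norm _ _).trans
        (mul_le_mul (hv q t) (hwb t) (norm_nonneg _) (hNnn q))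
    have habs : |D2 0| ≤ 2*((‖s‖ + N 1) * N 3) + 2*(N 2 * N 2) := by
      rw [hD2def]
      calc |((inner ℝ (w 0) (deriv^[3] g 0) : ℝ) + (inner ℝ (deriv^[2] g 0) (deriv^[2] g 0) : ℝ)) +
            ((inner ℝ (deriv^[2] g 0) (deriv^[2] g 0) : ℝ) + (inner ℝ (deriv^[3] g 0) (w 0) : ℝ))|
          ≤ (|(inner ℝ (w 0) (deriv^[3] g 0) : ℝ)| + |(inner ℝ (deriv^[2] g 0) (deriv^[2] g 0) : ℝ)|) +
            (|(inner ℝ (deriv^[2] g 0) (deriv^[2] g 0) : ℝ)| + |(inner ℝ (deriv^[3] g 0) (w 0) : ℝ)|) :=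
            (abs_add_le _ _).trans (add_le_add (abs_add_le _ _) (abs_add_le _ _))
        _ ≤ ((‖s‖ + N 1) * N 3 + N 2 * N 2) + (N 2 * N 2 + N 3 * (‖s‖ + N 1)) :=
            add_le_add (add_le_add (hipw 3 0) (hip 2 2 0)) (add_le_add (hip 2 2 0) (hipw' 3 0))
        _ = 2*((‖s‖ + N 1) * N 3) + 2*(N 2 * N 2) := by ring
    have hb3 : N 3 ≤ ‖s‖^3 * supDeriv 3 u := hNM 3
    have hcb : N 1 * N 3 ≤ 729 * (N 0 * N 4) := chain_bb hNnn hLan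
    have hcc : N 2 ^ 2 ≤ 6561 * (N 0 * N 4) := chain_c hNnn hLan
    have h4 : N 0 * N 4 ≤ (⨆ z, ‖u z‖) * (‖s‖^4 * supDeriv 4 u) := by
      rw [hN0A]
      exact mul_le_mul_of_nonneg_left (hNM 4) hA0
    have t2 : ‖s‖^4 * supDeriv 3 u ≤ (1+‖s‖)^5 * supDeriv 3 u :=
      mul_le_mul_of_nonneg_right (hsb 4 (by norm_num)) (hMnn 3)
    have t3 : (⨆ z, ‖u z‖) * (‖s‖^4 * supDeriv 4 u)
        ≤ (⨆ z, ‖u z‖) * ((1+‖s‖)^5 * supDeriv 4 u) :=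
      mul_le_mul_of_nonneg_left
        (mul_le_mul_of_nonneg_right (hsb 4 (by norm_num)) (hMnn 4)) hA0
    have p1 : 0 ≤ (1+‖s‖)^5 * supDeriv 3 u := mul_nonneg (by positivity) (hMnn 3)
    have p2 : 0 ≤ (⨆ z, ‖u z‖) * ((1+‖s‖)^5 * supDeriv 4 u) :=
      mul_nonneg hA0 (mul_nonneg (by positivity) (hMnn 4))
    rw [hiter 2, hder2]
    calc |D2 0| ≤ 2*((‖s‖ + N 1) * N 3) + 2*(N 2 * N 2) := habs
      _ = 2*‖s‖*N 3 + 2*(N 1*N 3) + 2*(N 2^2) := by ring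
      _ ≤ 2*‖s‖*(‖s‖^3*supDeriv 3 u) + 2*(729*(N 0*N 4)) + 2*(6561*(N 0*N 4)) := by
          apply add_le_add (add_le_add ?_ ?_) ?_
          · exact mul_le_mul_of_nonneg_left hb3 (by positivity)
          · exact mul_le_mul_of_nonneg_left hcb (by norm_num)
          · exact mul_le_mul_of_nonneg_left hcc (by norm_num)
      _ ≤ 2*‖s‖*(‖s‖^3*supDeriv 3 u) + 14580*((⨆ z, ‖u z‖)*(‖s‖^4*supDeriv 4 u)) := by
          linarith [h4]
      _ ≤ (10:ℝ)^7*(1+‖s‖)^5*((⨆ z, ‖u z‖)*supDeriv 4 u + supDeriv 3 u) := by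
          nlinarith [t2, t3, p1, p2, hMnn 3, hMnn 4, hA0]
  · -- k = 3
    have hip : ∀ (p q : ℕ) (t : ℝ),
        |(inner ℝ (deriv^[p] g t) (deriv^[q] g t) : ℝ)| ≤ N p * N q := fun p q t =>
      (abs_real_inner_le_norm _ _).trans
        (mul_le_mul (hv p t) (hv q t) (norm_nonneg _) (hNnn p))
    have hipw : ∀ (q : ℕ) (t : ℝ),
        |(inner ℝ (w t) (deriv^[q] g t) : ℝ)| ≤ (‖s‖ + N 1) * N q := fun q t =>
      (abs_real_inner_le_norm _ _).trans
        (mul_le_mul (hwb t) (hv q t) (norm_nonneg _) hsN1)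
    have hipw' : ∀ (q : ℕ) (t : ℝ),
        |(inner ℝ (deriv^[q] g t) (w t) : ℝ)| ≤ N q * (‖s‖ + N 1) := fun q t =>
      (abs_real_inner_le_norm _ _).trans
        (mul_le_mul (hv q t) (hwb t) (norm_nonneg _) (hNnn q))
    have habs : |D3 0| ≤ 2*((‖s‖ + N 1) * N 4) + 6*(N 2 * N 3) := by
      rw [hD3def]
      calc |(((inner ℝ (w 0) (deriv^[4] g 0) : ℝ) + (inner ℝ (deriv^[2] g 0) (deriv^[3] g 0) : ℝ)) +
            ((inner ℝ (deriv^[2] g 0) (deriv^[3] g 0) : ℝ) + (inner ℝ (deriv^[3] g 0) (deriv^[2] g 0) : ℝ))) +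
            (((inner ℝ (deriv^[2] g 0) (deriv^[3] g 0) : ℝ) + (inner ℝ (deriv^[3] g 0) (deriv^[2] g 0) : ℝ)) +
            ((inner ℝ (deriv^[3] g 0) (deriv^[2] g 0) : ℝ) + (inner ℝ (deriv^[4] g 0) (w 0) : ℝ)))|
          ≤ ((|(inner ℝ (w 0) (deriv^[4] g 0) : ℝ)| + |(inner ℝ (deriv^[2] g 0) (deriv^[3] g 0) : ℝ)|) +
            (|(inner ℝ (deriv^[2] g 0) (deriv^[3] g 0) : ℝ)| + |(inner ℝ (deriv^[3] g 0) (deriv^[2] g 0) : ℝ)|)) +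
            ((|(inner ℝ (deriv^[2] g 0) (deriv^[3] g 0) : ℝ)| + |(inner ℝ (deriv^[3] g 0) (deriv^[2] g 0) : ℝ)|) +
            (|(inner ℝ (deriv^[3] g 0) (deriv^[2] g 0) : ℝ)| + |(inner ℝ (deriv^[4] g 0) (w 0) : ℝ)|)) :=
            (abs_add_le _ _).trans (add_le_add
              ((abs_add_le _ _).trans (add_le_add (abs_add_le _ _) (abs_add_le _ _)))
              ((abs_add_le _ _).trans (add_le_add (abs_add_le _ _) (abs_add_le _ _))))
        _ ≤ (((‖s‖ + N 1) * N 4 + N 2 * N 3) + (N 2 * N 3 + N 3 * N 2)) +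
            ((N 2 * N 3 + N 3 * N 2) + (N 3 * N 2 + N 4 * (‖s‖ + N 1))) :=
            add_le_add
              (add_le_add (add_le_add (hipw 4 0) (hip 2 3 0))
                (add_le_add (hip 2 3 0) (hip 3 2 0)))
              (add_le_add (add_le_add (hip 2 3 0) (hip 3 2 0))
                (add_le_add (hip 3 2 0) (hipw' 4 0)))
        _ = 2*((‖s‖ + N 1) * N 4) + 6*(N 2 * N 3) := by ring
    have hb4 : N 4 ≤ ‖s‖^4 * supDeriv 4 u := hNM 4
    have hcd : N 1 * N 4 ≤ 6561 * (N 0 * N 5) := chain_d hNnn hLan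
    have hce : N 2 * N 3 ≤ 531441 * (N 0 * N 5) := chain_e hNnn hLan
    have h5 : N 0 * N 5 ≤ (⨆ z, ‖u z‖) * (‖s‖^5 * supDeriv 5 u) := by
      rw [hN0A]
      exact mul_le_mul_of_nonneg_left (hNM 5) hA0
    have t2 : ‖s‖^5 * supDeriv 4 u ≤ (1+‖s‖)^5 * supDeriv 4 u :=
      mul_le_mul_of_nonneg_right (hsb 5 (by norm_num)) (hMnn 4)
    have t3 : (⨆ z, ‖u z‖) * (‖s‖^5 * supDeriv 5 u)
        ≤ (⨆ z, ‖u z‖) * ((1+‖s‖)^5 * supDeriv 5 u) :=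
      mul_le_mul_of_nonneg_left
        (mul_le_mul_of_nonneg_right (hsb 5 (by norm_num)) (hMnn 5)) hA0
    have p1 : 0 ≤ (1+‖s‖)^5 * supDeriv 4 u := mul_nonneg (by positivity) (hMnn 4)
    have p2 : 0 ≤ (⨆ z, ‖u z‖) * ((1+‖s‖)^5 * supDeriv 5 u) :=
      mul_nonneg hA0 (mul_nonneg (by positivity) (hMnn 5))
    rw [hiter 3, hder3]
    calc |D3 0| ≤ 2*((‖s‖ + N 1) * N 4) + 6*(N 2 * N 3) := habs
      _ = 2*‖s‖*N 4 + 2*(N 1*N 4) + 6*(N 2*N 3) := by ring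
      _ ≤ 2*‖s‖*(‖s‖^4*supDeriv 4 u) + 2*(6561*(N 0*N 5)) + 6*(531441*(N 0*N 5)) := by
          apply add_le_add (add_le_add ?_ ?_) ?_
          · exact mul_le_mul_of_nonneg_left hb4 (by positivity)
          · exact mul_le_mul_of_nonneg_left hcd (by norm_num)
          · exact mul_le_mul_of_nonneg_left hce (by norm_num)
      _ ≤ 2*‖s‖*(‖s‖^4*supDeriv 4 u) + 3201768*((⨆ z, ‖u z‖)*(‖s‖^5*supDeriv 5 u)) := by
          linarith [h5]
      _ ≤ (10:ℝ)^7*(1+‖s‖)^5*((⨆ z, ‖u z‖)*supDeriv 5 u + supDeriv 4 u) := by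
          nlinarith [t2, t3, p1, p2, hMnn 4, hMnn 5, hA0]

end BondDensity
end
end
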